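/- arXiv:2308.01151 — 6 statements merged into one kernel-verified Lean document; each statement's English description precedes it below -/
import Mathlib

section
/- Let L > 0 and let ρ ∈ C²([0,L]) satisfy ρ(0) = ρ(L), ρ'(0) = ρ'(L), ∫₀^L ρ ds = νL, and μ ρ''(s) = c (β'(ρ(s)) − (1/L)∫₀^L β'(ρ(r)) dr) for all s, where μ > 0, c ≥ 0 are constants and β : ℝ → ℝ is C¹ and convex. Then ρ is constant (equal to ν). -/
/-!
Write `u = ρ - ν`, which has mean zero. Testing the equation against `u` and integrating by
parts (the boundary terms cancel by periodicity) gives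
`-μ ∫ ρ'² = c ∫ (β'(ρ) - β'(ν)) (ρ - ν)`, the mean-zero property letting the constant
`(1/L) ∫ β'(ρ)` be replaced by `β'(ν)`. Convexity makes `β'` monotone, so the right-hand side
is nonnegative while the left-hand side is nonpositive. Hence `ρ' ≡ 0`, `ρ` is constant,
and the mass constraint forces the constant to be `ν`.
-/

open Real Set intervalIntegral

lemma ConvexOn.monotone_of_hasDerivAt {f f' : ℝ → ℝ} (hf : ConvexOn ℝ univ f)
    (hf' : ∀ x, HasDerivAt f (f' x) x) : Monotone f' := by
  have hderiv : deriv f = f' := funext fun x => (hf' x).deriv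
  rw [← hderiv, ← monotoneOn_univ]
  exact hf.monotoneOn_deriv fun x _ => (hf' x).differentiableAt

lemma integral_sub_const_mul_eq_of_integral_eq_zero {g u : ℝ → ℝ} {a b : ℝ} (k k' : ℝ)
    (hgu : IntervalIntegrable (fun x => g x * u x) MeasureTheory.volume a b)
    (hu : IntervalIntegrable u MeasureTheory.volume a b) (hmean : ∫ x in a..b, u x = 0) :
    ∫ x in a..b, (g x - k) * u x = ∫ x in a..b, (g x - k') * u x := by
  have hshift : ∀ k : ℝ, ∫ x in a..b, (g x - k) * u x = ∫ x in a..b, g x * u x := fun k => by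
    simp_rw [sub_mul]
    rw [integral_sub hgu (hu.const_mul k), integral_const_mul, hmean, mul_zero, sub_zero]
  rw [hshift, hshift]

lemma integral_sub_const_mul_deriv2_eq_neg_integral_sq {ρ ρ' ρ'' : ℝ → ℝ} {a b : ℝ} (ν : ℝ)
    (hρ : ∀ x, HasDerivAt ρ (ρ' x) x) (hρ' : ∀ x, HasDerivAt ρ' (ρ'' x) x)
    (hρ'' : Continuous ρ'') (h0 : ρ a = ρ b) (h1 : ρ' a = ρ' b) :
    ∫ x in a..b, (ρ x - ν) * ρ'' x = -∫ x in a..b, ρ' x ^ 2 := by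
  have hρ'c : Continuous ρ' := continuous_iff_continuousAt.2 fun x => (hρ' x).continuousAt
  rw [integral_mul_deriv_eq_deriv_mul (fun x _ => (hρ x).sub_const ν) (fun x _ => hρ' x)
    (hρ'c.intervalIntegrable _ _) (hρ''.intervalIntegrable _ _), h0, h1]
  simp only [sub_self, zero_sub, sq]

lemma eq_zero_of_integral_sq_eq_zero {f : ℝ → ℝ} {a b : ℝ} (hab : a < b)
    (hf : ContinuousOn f (Icc a b)) (h : ∫ x in a..b, f x ^ 2 = 0) :
    ∀ x ∈ Icc a b, f x = 0 := by
  by_contra! hne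
  obtain ⟨c, hc, hfc⟩ := hne
  have hpos : 0 < ∫ x in a..b, f x ^ 2 :=
    integral_pos hab (hf.pow 2) (fun x _ => sq_nonneg _) ⟨c, hc, sq_pos_of_ne_zero hfc⟩
  exact hpos.ne' h

lemma eq_of_integral_sq_deriv_eq_zero {f f' : ℝ → ℝ} {a b : ℝ} (hab : a < b)
    (hf : ∀ x, HasDerivAt f (f' x) x) (hf' : Continuous f')
    (h : ∫ x in a..b, f' x ^ 2 = 0) : ∀ x ∈ Icc a b, f x = f a := by
  have hzero := eq_zero_of_integral_sq_eq_zero hab hf'.continuousOn h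
  refine constant_of_has_deriv_right_zero
    (continuous_iff_continuousAt.2 fun x => (hf x).continuousAt).continuousOn fun x hx => ?_
  rw [← hzero x (Ico_subset_Icc_self hx)]
  exact (hf x).hasDerivWithinAt

theorem stmt_4 (L ν μ c : ℝ) (hL : 0 < L) (hμ : 0 < μ) (hc : 0 ≤ c)
    (ρ ρ' ρ'' β β' : ℝ → ℝ)
    (hρ1 : ∀ s, HasDerivAt ρ (ρ' s) s)
    (hρ2 : ∀ s, HasDerivAt ρ' (ρ'' s) s)
    (hρ''c : Continuous ρ'')
    (hβ1 : ∀ x, HasDerivAt β (β' x) x)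
    (hβ'c : Continuous β')
    (hβconv : ConvexOn ℝ univ β)
    (hper0 : ρ 0 = ρ L) (hper1 : ρ' 0 = ρ' L)
    (hmass : (∫ s in (0:ℝ)..L, ρ s) = ν * L)
    (heq : ∀ s, μ * ρ'' s =
      c * (β' (ρ s) - (1 / L) * ∫ r in (0:ℝ)..L, β' (ρ r))) :
    ∀ s ∈ Icc 0 L, ρ s = ν := by
  have hρc : Continuous ρ := continuous_iff_continuousAt.2 fun x => (hρ1 x).continuousAt
  have hρ'c : Continuous ρ' := continuous_iff_continuousAt.2 fun x => (hρ2 x).continuousAt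
  have hmean : ∫ s in (0:ℝ)..L, (ρ s - ν) = 0 := by
    rw [integral_sub (hρc.intervalIntegrable _ _) intervalIntegrable_const, hmass,
      integral_const, smul_eq_mul]
    ring
  have henergy : -μ * ∫ s in (0:ℝ)..L, ρ' s ^ 2
      = c * ∫ s in (0:ℝ)..L, (β' (ρ s) - β' ν) * (ρ s - ν) := calc
    _ = μ * ∫ s in (0:ℝ)..L, (ρ s - ν) * ρ'' s := by
      rw [integral_sub_const_mul_deriv2_eq_neg_integral_sq ν hρ1 hρ2 hρ''c hper0 hper1]; ring
    _ = c * ∫ s in (0:ℝ)..L, (β' (ρ s) - (1 / L) * ∫ r in (0:ℝ)..L, β' (ρ r)) * (ρ s - ν) := by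
      rw [← integral_const_mul, ← integral_const_mul]
      exact integral_congr fun s _ => by linear_combination (ρ s - ν) * heq s
    _ = _ := congrArg (c * ·) <| integral_sub_const_mul_eq_of_integral_eq_zero _ _
      (((hβ'c.comp hρc).mul (hρc.sub continuous_const)).intervalIntegrable _ _)
      ((hρc.sub continuous_const).intervalIntegrable _ _) hmean
  have hdissipation : 0 ≤ ∫ s in (0:ℝ)..L, (β' (ρ s) - β' ν) * (ρ s - ν) :=
    integral_nonneg hL.le fun s _ =>
      ((hβconv.monotone_of_hasDerivAt hβ1).monovary monotone_id).sub_mul_sub_nonneg ν (ρ s)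
  have hsq : ∫ s in (0:ℝ)..L, ρ' s ^ 2 = 0 := by
    have hnonneg : 0 ≤ ∫ s in (0:ℝ)..L, ρ' s ^ 2 := integral_nonneg hL.le fun s _ => sq_nonneg _
    nlinarith [mul_nonneg hc hdissipation]
  have hconst := eq_of_integral_sq_deriv_eq_zero hL hρ1 hρ'c hsq
  have hρ0 : ρ 0 = ν := by
    have hmean' : ∫ s in (0:ℝ)..L, (ρ 0 - ν) = 0 :=
      (integral_congr fun s hs => by rw [hconst s (uIcc_of_le hL.le ▸ hs)]).trans hmean
    rw [integral_const, smul_eq_mul, sub_zero] at hmean'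
    linarith [(mul_eq_zero.1 hmean').resolve_left hL.ne']
  intro s hs
  rw [hconst s hs, hρ0]
end

section
/- Let L > 0, T > 0, and let G = {(t,s) : t₁ < t < t₂, x₁(t) < s < x₂(t)} where x₁ < x₂ are continuous curves on [t₁,t₂] ⊂ (0,T). Suppose κ is continuous on the closure of G, C^{1,2} in G, satisfies ∂_t κ = a ∂_s²κ + b ∂_s κ + c κ in G with a > 0 and c < 0 continuous, and κ = 0 on the lateral curves {(t,x_i(t))}. If κ(t₂,·) > 0 somewhere on (x₁(t₂), x₂(t₂)), then κ(t₁,·) > 0 somewhere on (x₁(t₁), x₂(t₁)). -/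
open Real Set Topology Filter

theorem stmt_9 (T t₁ t₂ : ℝ) (hT : 0 < T) (ht₁ : 0 < t₁) (ht : t₁ < t₂) (ht₂ : t₂ < T)
    (x₁ x₂ : ℝ → ℝ)
    (hx₁ : ContinuousOn x₁ (Icc t₁ t₂)) (hx₂ : ContinuousOn x₂ (Icc t₁ t₂))
    (hlt : ∀ t ∈ Icc t₁ t₂, x₁ t < x₂ t)
    (G : Set (ℝ × ℝ))
    (hG : G = {p : ℝ × ℝ | t₁ < p.1 ∧ p.1 < t₂ ∧ x₁ p.1 < p.2 ∧ p.2 < x₂ p.1})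
    (a b c κ κt κs κss : ℝ → ℝ → ℝ)
    (hκcont : ContinuousOn (fun p : ℝ × ℝ => κ p.1 p.2) (closure G))
    (hacont : ContinuousOn (fun p : ℝ × ℝ => a p.1 p.2) G)
    (hccont : ContinuousOn (fun p : ℝ × ℝ => c p.1 p.2) G)
    (hapos : ∀ p ∈ G, 0 < a p.1 p.2)
    (hcneg : ∀ p ∈ G, c p.1 p.2 < 0)
    (hκt : ∀ p ∈ G, HasDerivAt (fun τ => κ τ p.2) (κt p.1 p.2) p.1)
    (hκs : ∀ p ∈ G, HasDerivAt (fun x => κ p.1 x) (κs p.1 p.2) p.2)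
    (hκss : ∀ p ∈ G, HasDerivAt (fun x => κs p.1 x) (κss p.1 p.2) p.2)
    (hpde : ∀ p ∈ G, κt p.1 p.2 =
      a p.1 p.2 * κss p.1 p.2 + b p.1 p.2 * κs p.1 p.2 + c p.1 p.2 * κ p.1 p.2)
    (hlat : ∀ t ∈ Icc t₁ t₂, κ t (x₁ t) = 0 ∧ κ t (x₂ t) = 0)
    (htop : ∃ s ∈ Ioo (x₁ t₂) (x₂ t₂), 0 < κ t₂ s) :
    ∃ s ∈ Ioo (x₁ t₁) (x₂ t₁), 0 < κ t₁ s := by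
  by_contra hcon
  push_neg at hcon
  obtain ⟨s₀, hs₀, hκs₀⟩ := htop
  -- continuous extensions of x₁, x₂ to all of ℝ
  set y₁ : ℝ → ℝ := fun t => x₁ ↑(projIcc t₁ t₂ ht.le t) with hy₁def
  set y₂ : ℝ → ℝ := fun t => x₂ ↑(projIcc t₁ t₂ ht.le t) with hy₂def
  have hy₁c : Continuous y₁ := hx₁.restrict.comp continuous_projIcc
  have hy₂c : Continuous y₂ := hx₂.restrict.comp continuous_projIcc
  have hy₁eq : ∀ t ∈ Icc t₁ t₂, y₁ t = x₁ t := by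
    intro t htm; simp only [hy₁def]; rw [projIcc_of_mem ht.le htm]
  have hy₂eq : ∀ t ∈ Icc t₁ t₂, y₂ t = x₂ t := by
    intro t htm; simp only [hy₂def]; rw [projIcc_of_mem ht.le htm]
  have hGeq : G = {p : ℝ × ℝ | t₁ < p.1 ∧ p.1 < t₂ ∧ y₁ p.1 < p.2 ∧ p.2 < y₂ p.1} := by
    rw [hG]; ext p
    simp only [mem_setOf_eq]
    constructor
    · rintro ⟨h1, h2, h3, h4⟩
      rw [hy₁eq p.1 ⟨h1.le, h2.le⟩, hy₂eq p.1 ⟨h1.le, h2.le⟩]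
      exact ⟨h1, h2, h3, h4⟩
    · rintro ⟨h1, h2, h3, h4⟩
      rw [hy₁eq p.1 ⟨h1.le, h2.le⟩] at h3
      rw [hy₂eq p.1 ⟨h1.le, h2.le⟩] at h4
      exact ⟨h1, h2, h3, h4⟩
  have hGopen : IsOpen G := by
    rw [hGeq, setOf_and, setOf_and, setOf_and]
    exact (isOpen_lt continuous_const continuous_fst).inter
      ((isOpen_lt continuous_fst continuous_const).inter
        ((isOpen_lt (hy₁c.comp continuous_fst) continuous_snd).inter
          (isOpen_lt continuous_snd (hy₂c.comp continuous_fst))))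
  -- the closed "cylinder" C and compactness of closure G
  set C : Set (ℝ × ℝ) :=
    {p : ℝ × ℝ | t₁ ≤ p.1 ∧ p.1 ≤ t₂ ∧ y₁ p.1 ≤ p.2 ∧ p.2 ≤ y₂ p.1} with hCdef
  have hCclosed : IsClosed C := by
    rw [hCdef, setOf_and, setOf_and, setOf_and]
    exact (isClosed_le continuous_const continuous_fst).inter
      ((isClosed_le continuous_fst continuous_const).inter
        ((isClosed_le (hy₁c.comp continuous_fst) continuous_snd).inter
          (isClosed_le continuous_snd (hy₂c.comp continuous_fst))))
  have hGC : G ⊆ C := by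
    intro p hp
    rw [hGeq] at hp
    exact ⟨hp.1.le, hp.2.1.le, hp.2.2.1.le, hp.2.2.2.le⟩
  have hclosGC : closure G ⊆ C := closure_minimal hGC hCclosed
  obtain ⟨tA, htA, hA⟩ :=
    isCompact_Icc.exists_isMinOn (α := ℝ) ⟨t₁, le_refl _, ht.le⟩ hx₁
  obtain ⟨tB, htB, hB⟩ :=
    isCompact_Icc.exists_isMaxOn (α := ℝ) ⟨t₁, le_refl _, ht.le⟩ hx₂
  have hCcomp : IsCompact C := by
    refine IsCompact.of_isClosed_subset
      (isCompact_Icc.prod isCompact_Icc : IsCompact (Icc t₁ t₂ ×ˢ Icc (x₁ tA) (x₂ tB)))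
      hCclosed ?_
    rintro ⟨u, v⟩ ⟨h1, h2, h3, h4⟩
    have hu : u ∈ Icc t₁ t₂ := ⟨h1, h2⟩
    rw [hy₁eq u hu] at h3
    rw [hy₂eq u hu] at h4
    exact ⟨hu, (hA hu).trans h3, h4.trans (hB hu)⟩
  have hclosGcomp : IsCompact (closure G) :=
    hCcomp.of_isClosed_subset isClosed_closure hclosGC
  -- Key claim: κ ≤ 0 on G
  have hkey : ∀ p ∈ G, κ p.1 p.2 ≤ 0 := by
    intro p₀ hp₀
    by_contra hpos
    push_neg at hpos
    set t₀ := p₀.1 with ht₀def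
    set K : Set (ℝ × ℝ) := closure G ∩ {p : ℝ × ℝ | p.1 ≤ t₀} with hKdef
    have hKcomp : IsCompact K :=
      hclosGcomp.inter_right (isClosed_le continuous_fst continuous_const)
    have hp₀K : p₀ ∈ K := ⟨subset_closure hp₀, show p₀.1 ≤ t₀ from le_refl _⟩
    obtain ⟨pS, hpSK, hmax⟩ :=
      hKcomp.exists_isMaxOn ⟨p₀, hp₀K⟩ (hκcont.mono inter_subset_left)
    obtain ⟨tS, sS⟩ := pS
    have hM : 0 < κ tS sS := lt_of_lt_of_le hpos (hmax hp₀K)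
    have hpSC : (tS, sS) ∈ C := hclosGC hpSK.1
    obtain ⟨htS1, htS2, hsS1, hsS2⟩ := hpSC
    have htS1 : t₁ ≤ tS := htS1
    have htS2 : tS ≤ t₂ := htS2
    have hsS1 : y₁ tS ≤ sS := hsS1
    have hsS2 : sS ≤ y₂ tS := hsS2
    have htSt₀ : tS ≤ t₀ := hpSK.2
    have hp₀G : p₀ ∈ G := hp₀
    have ht₀lt : t₀ < t₂ := by rw [hGeq] at hp₀G; exact hp₀G.2.1
    have htSlt : tS < t₂ := lt_of_le_of_lt htSt₀ ht₀lt
    have htSIcc : tS ∈ Icc t₁ t₂ := ⟨htS1, htS2⟩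
    -- tS ≠ t₁
    rcases eq_or_lt_of_le htS1 with heq1 | hlt1
    · -- bottom: κ t₁ · ≤ 0
      rw [← heq1] at hM hsS1 hsS2
      rw [hy₁eq t₁ ⟨le_refl _, ht.le⟩] at hsS1
      rw [hy₂eq t₁ ⟨le_refl _, ht.le⟩] at hsS2
      rcases eq_or_lt_of_le hsS1 with hes | hls
      · rw [← hes] at hM
        rw [(hlat t₁ ⟨le_refl _, ht.le⟩).1] at hM
        exact lt_irrefl _ hM
      · rcases eq_or_lt_of_le hsS2 with hes2 | hls2
        · rw [hes2] at hM
          rw [(hlat t₁ ⟨le_refl _, ht.le⟩).2] at hM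
          exact lt_irrefl _ hM
        · exact absurd (hcon sS ⟨hls, hls2⟩) (not_le.mpr hM)
    -- sS not on the lateral boundary
    rcases eq_or_lt_of_le hsS1 with hes | hls
    · rw [← hes, hy₁eq tS htSIcc, (hlat tS htSIcc).1] at hM
      exact lt_irrefl _ hM
    rcases eq_or_lt_of_le hsS2 with hes2 | hls2
    · rw [hes2, hy₂eq tS htSIcc, (hlat tS htSIcc).2] at hM
      exact lt_irrefl _ hM
    -- interior maximum
    have hpSG : (tS, sS) ∈ G := by rw [hGeq]; exact ⟨hlt1, htSlt, hls, hls2⟩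
    -- points of G with time ≤ t₀ are in K, hence κ ≤ M there
    have hGK : ∀ q : ℝ × ℝ, q ∈ G → q.1 ≤ t₀ → κ q.1 q.2 ≤ κ tS sS := fun q hq hq' =>
      hmax ⟨subset_closure hq, hq'⟩
    -- κs vanishes at the max
    have hslice : ∀ᶠ s in 𝓝 sS, (tS, s) ∈ G := by
      have : Continuous fun s : ℝ => ((tS, s) : ℝ × ℝ) := continuous_const.prodMk continuous_id
      exact this.continuousAt.preimage_mem_nhds (hGopen.mem_nhds hpSG)
    have hlocmax : IsLocalMax (fun s => κ tS s) sS := by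
      filter_upwards [hslice] with s hs
      exact hGK (tS, s) hs htSt₀
    have hκs0 : κs tS sS = 0 := hlocmax.hasDerivAt_eq_zero (hκs (tS, sS) hpSG)
    -- second derivative test: κss ≤ 0
    have hκssle : κss tS sS ≤ 0 := by
      by_contra hss
      push_neg at hss
      have hslope := hasDerivAt_iff_tendsto_slope.mp (hκss (tS, sS) hpSG)
      have hev : ∀ᶠ s in 𝓝[≠] sS, 0 < slope (fun x => κs tS x) sS s :=
        hslope.eventually (eventually_gt_nhds hss)
      rw [eventually_nhdsWithin_iff] at hev
      obtain ⟨E, hEmem, hEprop⟩ := eventually_iff_exists_mem.mp (hev.and hslice)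
      obtain ⟨δ, hδ, hball⟩ := Metric.mem_nhds_iff.mp hEmem
      obtain ⟨sP, hsPlt, hsPd⟩ : ∃ sP : ℝ, sS < sP ∧ sP - sS < δ :=
        ⟨sS + δ / 2, by linarith, by linarith⟩
      have hmem : ∀ s : ℝ, sS < s → s ≤ sP → s ∈ E := by
        intro s h1 h2
        apply hball
        rw [Metric.mem_ball, Real.dist_eq, abs_of_pos (by linarith)]
        linarith
      have hκspos : ∀ s : ℝ, sS < s → s ≤ sP → 0 < κs tS s := by
        intro s h1 h2
        have := (hEprop s (hmem s h1 h2)).1 (ne_of_gt h1)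
        rw [slope_def_field] at this
        have hd : (0:ℝ) < s - sS := by linarith
        have := mul_pos this hd
        rw [div_mul_cancel₀] at this
        · rw [hκs0] at this; linarith
        · exact ne_of_gt hd
      have hGmem : ∀ s : ℝ, sS ≤ s → s ≤ sP → (tS, s) ∈ G := by
        intro s h1 h2
        rcases eq_or_lt_of_le h1 with h | h
        · rw [← h]; exact hpSG
        · exact (hEprop s (hmem s h h2)).2
      have hmono : StrictMonoOn (fun s => κ tS s) (Icc sS sP) := by
        apply strictMonoOn_of_deriv_pos (convex_Icc _ _)
        · intro s hs
          exact ((hκs (tS, s) (hGmem s hs.1 hs.2)).continuousAt).continuousWithinAt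
        · intro s hs
          rw [interior_Icc] at hs
          rw [(hκs (tS, s) (hGmem s hs.1.le hs.2.le)).deriv]
          exact hκspos s hs.1 hs.2.le
      have h1 : κ tS sS < κ tS sP :=
        hmono ⟨le_refl _, hsPlt.le⟩ ⟨hsPlt.le, le_refl _⟩ hsPlt
      have h2 : κ tS sP ≤ κ tS sS := hGK (tS, sP) (hGmem sP hsPlt.le (le_refl _)) htSt₀
      linarith
    -- time derivative is nonnegative at the max
    have hκtge : 0 ≤ κt tS sS := by
      by_contra hκtlt
      push_neg at hκtlt
      have hslope := hasDerivAt_iff_tendsto_slope.mp (hκt (tS, sS) hpSG)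
      have hev : ∀ᶠ τ in 𝓝[≠] tS, slope (fun τ => κ τ sS) tS τ < 0 :=
        hslope.eventually (eventually_lt_nhds hκtlt)
      have hev2 : ∀ᶠ τ in 𝓝 tS, (τ, sS) ∈ G := by
        have : Continuous fun τ : ℝ => ((τ, sS) : ℝ × ℝ) := continuous_id.prodMk continuous_const
        exact this.continuousAt.preimage_mem_nhds (hGopen.mem_nhds hpSG)
      have hev3 : ∀ᶠ τ in 𝓝[<] tS,
          slope (fun τ => κ τ sS) tS τ < 0 ∧ (τ, sS) ∈ G ∧ τ < tS := by
        refine ((hev.filter_mono (nhdsWithin_mono _ fun τ hτ => ne_of_lt hτ)).and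
          (((hev2.filter_mono nhdsWithin_le_nhds).and eventually_mem_nhdsWithin))).mono ?_
        rintro τ ⟨h1, h2, h3⟩
        exact ⟨h1, h2, h3⟩
      obtain ⟨τ, hτ1, hτ2, hτ3⟩ := hev3.exists
      rw [slope_def_field] at hτ1
      have hd : τ - tS < 0 := by linarith
      have := div_neg_iff.mp hτ1
      have hgt : κ tS sS < κ τ sS := by
        rcases this with ⟨h, h'⟩ | ⟨h, h'⟩
        · linarith
        · linarith
      have : κ τ sS ≤ κ tS sS := hGK (τ, sS) hτ2 (le_of_lt (lt_of_lt_of_le hτ3 htSt₀))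
      linarith
    -- contradiction with the PDE
    have hpde' := hpde (tS, sS) hpSG
    simp only at hpde'
    have ha := hapos (tS, sS) hpSG
    have hc := hcneg (tS, sS) hpSG
    simp only at ha hc
    have h1 : a tS sS * κss tS sS ≤ 0 := mul_nonpos_of_nonneg_of_nonpos ha.le hκssle
    have h2 : c tS sS * κ tS sS < 0 := mul_neg_of_neg_of_pos hc hM
    rw [hκs0] at hpde'
    simp only [mul_zero, add_zero] at hpde'
    linarith
  -- κ ≤ 0 on closure G
  have hclosle : ∀ p ∈ closure G, κ p.1 p.2 ≤ 0 := by
    intro p hp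
    have hne : (𝓝[G] p).NeBot := mem_closure_iff_nhdsWithin_neBot.mp hp
    have htend : Filter.Tendsto (fun q : ℝ × ℝ => κ q.1 q.2) (𝓝[G] p) (𝓝 (κ p.1 p.2)) :=
      (hκcont p hp).mono_left (nhdsWithin_mono p subset_closure)
    exact le_of_tendsto htend (Filter.eventually_inf_principal.mpr
      (Filter.Eventually.of_forall fun q hq => hkey q hq))
  -- (t₂, s₀) is in closure G
  have hmem : ((t₂, s₀) : ℝ × ℝ) ∈ closure G := by
    have h1 : s₀ ∈ Ioo (y₁ t₂) (y₂ t₂) := by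
      rw [hy₁eq t₂ ⟨ht.le, le_refl _⟩, hy₂eq t₂ ⟨ht.le, le_refl _⟩]
      exact hs₀
    have hU : IsOpen {τ : ℝ | t₁ < τ ∧ y₁ τ < s₀ ∧ s₀ < y₂ τ} := by
      rw [setOf_and, setOf_and]
      exact (isOpen_lt continuous_const continuous_id).inter
        ((isOpen_lt hy₁c continuous_const).inter (isOpen_lt continuous_const hy₂c))
    have hUt₂ : t₂ ∈ {τ : ℝ | t₁ < τ ∧ y₁ τ < s₀ ∧ s₀ < y₂ τ} := ⟨ht, h1.1, h1.2⟩
    have hevU : ∀ᶠ τ in 𝓝 t₂, τ ∈ {τ : ℝ | t₁ < τ ∧ y₁ τ < s₀ ∧ s₀ < y₂ τ} :=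
      hU.mem_nhds hUt₂
    have hevG : ∀ᶠ τ in 𝓝[<] t₂, ((τ, s₀) : ℝ × ℝ) ∈ G := by
      refine ((hevU.filter_mono nhdsWithin_le_nhds).and eventually_mem_nhdsWithin).mono ?_
      rintro τ ⟨⟨h1, h2, h3⟩, h4⟩
      rw [hGeq]
      exact ⟨h1, h4, h2, h3⟩
    have htt : Filter.Tendsto (fun τ : ℝ => ((τ, s₀) : ℝ × ℝ)) (𝓝[<] t₂) (𝓝 (t₂, s₀)) :=
      ((continuous_id.prodMk continuous_const).tendsto t₂).mono_left nhdsWithin_le_nhds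
    exact mem_closure_of_tendsto htt hevG
  have := hclosle (t₂, s₀) hmem
  simp only at this
  linarith
end

section
/- Let (θ, ρ) be a smooth solution of the gradient-flow system ∂_t θ = ∂_s(β(ρ)(∂_s θ − c₀)) + λ₁ sin θ − λ₂ cos θ, ∂_t ρ = μ ∂_s²ρ − (1/2)β'(ρ)(∂_s θ − c₀)² − λ_ρ on (0,T) × [0,L] with periodic boundary conditions (θ(·,L) − θ(·,0) = 2πω, ρ and first derivatives periodic), where λ₁, λ₂, λ_ρ are given by the nonlocal formulas ensuring the constraints, namely λ_ρ(t) = −(1/(2L))∫₀^L β'(ρ)(∂_s θ − c₀)² ds and (λ₁,λ₂) chosen so that ∫₀^L ∂_t θ sin θ ds = ∫₀^L ∂_t θ cos θ ds = 0. Then d/dt E_μ(θ(t), ρ(t)) = −∫₀^L (∂_t θ)² ds − ∫₀^L (∂_t ρ)² ds ≤ 0, where E_μ(θ,ρ) = (1/2)∫₀^L (β(ρ)(∂_s θ − c₀)² + μ(∂_s ρ)²) ds. -/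
open Real Set

lemma pd_snd {F : ℝ × ℝ → ℝ} (hF : ContDiff ℝ (⊤ : ℕ∞) F) (t s : ℝ) :
    HasDerivAt (fun x => F (t, x)) (fderiv ℝ F (t, s) (0, 1)) s := by
  have h1 : HasDerivAt (fun x : ℝ => ((t : ℝ), x)) ((0 : ℝ), (1 : ℝ)) s :=
    (hasDerivAt_const s t).prodMk (hasDerivAt_id s)
  exact (hF.differentiable (by simp) (t, s)).hasFDerivAt.comp_hasDerivAt s h1

lemma pd_fst {F : ℝ × ℝ → ℝ} (hF : ContDiff ℝ (⊤ : ℕ∞) F) (t s : ℝ) :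
    HasDerivAt (fun τ => F (τ, s)) (fderiv ℝ F (t, s) (1, 0)) t := by
  have h1 : HasDerivAt (fun τ : ℝ => (τ, (s : ℝ))) ((1 : ℝ), (0 : ℝ)) t :=
    (hasDerivAt_id t).prodMk (hasDerivAt_const t s)
  exact (hF.differentiable (by simp) (t, s)).hasFDerivAt.comp_hasDerivAt t h1

lemma pd_smooth {F : ℝ × ℝ → ℝ} (hF : ContDiff ℝ (⊤ : ℕ∞) F) (v : ℝ × ℝ) :
    ContDiff ℝ (⊤ : ℕ∞) (fun p => fderiv ℝ F p v) :=
  (hF.fderiv_right (by simp)).clm_apply contDiff_const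

lemma pd_symm {F : ℝ × ℝ → ℝ} (hF : ContDiff ℝ (⊤ : ℕ∞) F) (p v w : ℝ × ℝ) :
    fderiv ℝ (fun q => fderiv ℝ F q v) p w = fderiv ℝ (fun q => fderiv ℝ F q w) p v := by
  have hdf : Differentiable ℝ (fderiv ℝ F) := (hF.fderiv_right (m := 1) (by exact WithTop.coe_le_coe.mpr le_top)).differentiable one_ne_zero
  have hp : HasFDerivAt (fderiv ℝ F) (fderiv ℝ (fderiv ℝ F) p) p := (hdf p).hasFDerivAt
  have key : ∀ u : ℝ × ℝ, fderiv ℝ (fun q => fderiv ℝ F q u) p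
      = (ContinuousLinearMap.apply ℝ ℝ u).comp (fderiv ℝ (fderiv ℝ F) p) := by
    intro u
    exact ((ContinuousLinearMap.apply ℝ ℝ u).hasFDerivAt.comp p hp).fderiv
  rw [key v, key w]
  simp only [ContinuousLinearMap.coe_comp', Function.comp_apply,
    ContinuousLinearMap.apply_apply]
  exact second_derivative_symmetric (fun y => (hF.differentiable (by simp) y).hasFDerivAt) hp w v

theorem stmt_10 (L T μ c₀ : ℝ) (ω : ℤ) (hL : 0 < L) (hT : 0 < T) (hμ : 0 < μ)
    (β β' : ℝ → ℝ) (hβpos : ∀ x, 0 < β x)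
    (hβ' : ∀ x, HasDerivAt β (β' x) x) (hβ'c : Continuous β')
    (θ ρ : ℝ → ℝ → ℝ)
    (hθsm : ContDiff ℝ (⊤ : ℕ∞) (fun p : ℝ × ℝ => θ p.1 p.2))
    (hρsm : ContDiff ℝ (⊤ : ℕ∞) (fun p : ℝ × ℝ => ρ p.1 p.2))
    (lam₁ lam₂ lamρ : ℝ → ℝ)
    -- periodic boundary conditions
    (hbcθ : ∀ t ∈ Ioo 0 T, θ t L - θ t 0 = 2 * π * ω)
    (hbcρ : ∀ t ∈ Ioo 0 T, ρ t L = ρ t 0)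
    (hbcθ' : ∀ t ∈ Ioo 0 T, deriv (θ t) L = deriv (θ t) 0)
    (hbcρ' : ∀ t ∈ Ioo 0 T, deriv (ρ t) L = deriv (ρ t) 0)
    -- the evolution equations
    (hpdeθ : ∀ t ∈ Ioo 0 T, ∀ s ∈ Icc 0 L,
      deriv (fun τ => θ τ s) t =
        deriv (fun x => β (ρ t x) * (deriv (θ t) x - c₀)) s
          + lam₁ t * Real.sin (θ t s) - lam₂ t * Real.cos (θ t s))
    (hpdeρ : ∀ t ∈ Ioo 0 T, ∀ s ∈ Icc 0 L,
      deriv (fun τ => ρ τ s) t =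
        μ * deriv (deriv (ρ t)) s
          - (1 / 2) * β' (ρ t s) * (deriv (θ t) s - c₀) ^ 2 - lamρ t)
    -- the nonlocal Lagrange multipliers
    (hlamρ : ∀ t ∈ Ioo 0 T,
      lamρ t = -(1 / (2 * L)) * ∫ s in (0:ℝ)..L, β' (ρ t s) * (deriv (θ t) s - c₀) ^ 2)
    (hlam₁ : ∀ t ∈ Ioo 0 T,
      (∫ s in (0:ℝ)..L, deriv (fun τ => θ τ s) t * Real.sin (θ t s)) = 0)
    (hlam₂ : ∀ t ∈ Ioo 0 T,
      (∫ s in (0:ℝ)..L, deriv (fun τ => θ τ s) t * Real.cos (θ t s)) = 0) :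
    ∀ t ∈ Ioo 0 T,
      HasDerivAt (fun τ => (1 / 2) * ∫ s in (0:ℝ)..L,
          (β (ρ τ s) * (deriv (θ τ) s - c₀) ^ 2 + μ * (deriv (ρ τ) s) ^ 2))
        (-(∫ s in (0:ℝ)..L, (deriv (fun τ => θ τ s) t) ^ 2)
          - ∫ s in (0:ℝ)..L, (deriv (fun τ => ρ τ s) t) ^ 2) t ∧
      (-(∫ s in (0:ℝ)..L, (deriv (fun τ => θ τ s) t) ^ 2)
          - ∫ s in (0:ℝ)..L, (deriv (fun τ => ρ τ s) t) ^ 2) ≤ 0 := by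
  intro t ht
  have hβd : Differentiable ℝ β := fun x => (hβ' x).differentiableAt
  have hβc : Continuous β := hβd.continuous
  set F : ℝ × ℝ → ℝ := fun p => θ p.1 p.2 with hFdef
  set G : ℝ × ℝ → ℝ := fun p => ρ p.1 p.2 with hGdef
  set θs : ℝ × ℝ → ℝ := fun p => fderiv ℝ F p (0, 1) with hθsdef
  set θt : ℝ × ℝ → ℝ := fun p => fderiv ℝ F p (1, 0) with hθtdef
  set ρs : ℝ × ℝ → ℝ := fun p => fderiv ℝ G p (0, 1) with hρsdef
  set ρt : ℝ × ℝ → ℝ := fun p => fderiv ℝ G p (1, 0) with hρtdef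
  set θst : ℝ × ℝ → ℝ := fun p => fderiv ℝ θs p (1, 0) with hθstdef
  set ρst : ℝ × ℝ → ℝ := fun p => fderiv ℝ ρs p (1, 0) with hρstdef
  set θss : ℝ × ℝ → ℝ := fun p => fderiv ℝ θs p (0, 1) with hθssdef
  set ρss : ℝ × ℝ → ℝ := fun p => fderiv ℝ ρs p (0, 1) with hρssdef
  -- smoothness of partials
  have smθs : ContDiff ℝ (⊤ : ℕ∞) θs := pd_smooth hθsm _
  have smθt : ContDiff ℝ (⊤ : ℕ∞) θt := pd_smooth hθsm _
  have smρs : ContDiff ℝ (⊤ : ℕ∞) ρs := pd_smooth hρsm _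
  have smρt : ContDiff ℝ (⊤ : ℕ∞) ρt := pd_smooth hρsm _
  -- basic derivative identifications
  have dsθ : ∀ a b, HasDerivAt (θ a) (θs (a, b)) b := fun a b => pd_snd hθsm a b
  have dsρ : ∀ a b, HasDerivAt (ρ a) (ρs (a, b)) b := fun a b => pd_snd hρsm a b
  have dtθ : ∀ a b, HasDerivAt (fun τ => θ τ b) (θt (a, b)) a := fun a b => pd_fst hθsm a b
  have dtρ : ∀ a b, HasDerivAt (fun τ => ρ τ b) (ρt (a, b)) a := fun a b => pd_fst hρsm a b
  have dθ_eq : ∀ a b, deriv (θ a) b = θs (a, b) := fun a b => (dsθ a b).deriv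
  have dρ_eq : ∀ a b, deriv (ρ a) b = ρs (a, b) := fun a b => (dsρ a b).deriv
  have dtθ_eq : ∀ a b, deriv (fun τ => θ τ b) a = θt (a, b) := fun a b => (dtθ a b).deriv
  have dtρ_eq : ∀ a b, deriv (fun τ => ρ τ b) a = ρt (a, b) := fun a b => (dtρ a b).deriv
  -- Clairaut
  have clθ : ∀ p, θst p = fderiv ℝ θt p (0, 1) := fun p => pd_symm hθsm p _ _
  have clρ : ∀ p, ρst p = fderiv ℝ ρt p (0, 1) := fun p => pd_symm hρsm p _ _
  -- space derivatives of time derivatives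
  have dsθt : ∀ b, HasDerivAt (fun x => θt (t, x)) (θst (t, b)) b := by
    intro b; rw [clθ]; exact pd_snd smθt t b
  have dsρt : ∀ b, HasDerivAt (fun x => ρt (t, x)) (ρst (t, b)) b := by
    intro b; rw [clρ]; exact pd_snd smρt t b
  -- continuity facts
  have cG : Continuous G := hρsm.continuous
  have cF : Continuous F := hθsm.continuous
  have cθs : Continuous θs := smθs.continuous
  have cθt : Continuous θt := smθt.continuous
  have cρs : Continuous ρs := smρs.continuous
  have cρt : Continuous ρt := smρt.continuous
  have cθst : Continuous θst := (pd_smooth smθs _).continuous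
  have cρst : Continuous ρst := (pd_smooth smρs _).continuous
  have cθss : Continuous θss := (pd_smooth smθs _).continuous
  have cρss : Continuous ρss := (pd_smooth smρs _).continuous
  have slice : ∀ {H : ℝ × ℝ → ℝ}, Continuous H → ∀ a : ℝ, Continuous (fun x => H (a, x)) :=
    fun hH a => hH.comp (continuous_const.prodMk continuous_id)
  -- boundary values
  have hbθt : θt (t, L) = θt (t, 0) := by
    have hev : (fun τ => θ τ L) =ᶠ[nhds t] (fun τ => θ τ 0 + 2 * π * ω) := by
      filter_upwards [isOpen_Ioo.mem_nhds ht] with τ hτ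
      have := hbcθ τ hτ; linarith
    rw [← dtθ_eq t L, ← dtθ_eq t 0, hev.deriv_eq, deriv_add_const]
  have hbρt : ρt (t, L) = ρt (t, 0) := by
    have hev : (fun τ => ρ τ L) =ᶠ[nhds t] (fun τ => ρ τ 0) := by
      filter_upwards [isOpen_Ioo.mem_nhds ht] with τ hτ using hbcρ τ hτ
    rw [← dtρ_eq t L, ← dtρ_eq t 0, hev.deriv_eq]
  have hbρs : ρs (t, L) = ρs (t, 0) := by rw [← dρ_eq, ← dρ_eq]; exact hbcρ' t ht
  have hbθs : θs (t, L) = θs (t, 0) := by rw [← dθ_eq, ← dθ_eq]; exact hbcθ' t ht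
  have hbG : G (t, L) = G (t, 0) := hbcρ t ht
  -- the function u inside the θ-equation and its derivative U
  set u : ℝ → ℝ := fun x => β (G (t, x)) * (θs (t, x) - c₀) with hudef
  set U : ℝ → ℝ := fun x =>
    β' (G (t, x)) * ρs (t, x) * (θs (t, x) - c₀) + β (G (t, x)) * θss (t, x) with hUdef
  have hu' : ∀ x, HasDerivAt u (U x) x := by
    intro x
    have h1 : HasDerivAt (fun y => β (G (t, y))) (β' (G (t, x)) * ρs (t, x)) x :=
      (hβ' (G (t, x))).comp x (pd_snd hρsm t x)
    have h2 : HasDerivAt (fun y => θs (t, y) - c₀) (θss (t, x)) x :=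
      (pd_snd smθs t x).sub_const c₀
    exact h1.mul h2
  have hu_eq : u = fun x => β (ρ t x) * (deriv (θ t) x - c₀) := by
    funext x; rw [hudef]; simp only [dθ_eq]; rfl
  have hbu : u L = u 0 := by rw [hudef]; simp only [hbG, hbθs]
  -- rewritten PDEs
  have pdeθ' : ∀ s ∈ Icc (0:ℝ) L,
      θt (t, s) = U s + lam₁ t * Real.sin (θ t s) - lam₂ t * Real.cos (θ t s) := by
    intro s hs
    have h := hpdeθ t ht s hs
    rw [dtθ_eq, ← hu_eq, (hu' s).deriv] at h
    exact h
  have pdeρ' : ∀ s ∈ Icc (0:ℝ) L,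
      ρt (t, s) = μ * ρss (t, s) - (1 / 2) * β' (G (t, s)) * (θs (t, s) - c₀) ^ 2 - lamρ t := by
    intro s hs
    have h := hpdeρ t ht s hs
    have h2 : deriv (deriv (ρ t)) s = ρss (t, s) := by
      have e : deriv (ρ t) = fun x => ρs (t, x) := funext fun x => dρ_eq t x
      rw [e]; exact (pd_snd smρs t s).deriv
    rw [dtρ_eq, h2, dθ_eq] at h
    exact h
  -- the energy integrand and its time derivative
  set f : ℝ → ℝ → ℝ := fun τ x =>
    β (G (τ, x)) * (θs (τ, x) - c₀) ^ 2 + μ * (ρs (τ, x)) ^ 2 with hfdef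
  set f' : ℝ → ℝ → ℝ := fun τ x =>
    β' (G (τ, x)) * ρt (τ, x) * (θs (τ, x) - c₀) ^ 2
      + β (G (τ, x)) * (2 * (θs (τ, x) - c₀) * θst (τ, x))
      + μ * (2 * ρs (τ, x) * ρst (τ, x)) with hf'def
  have hdiff : ∀ (τ x : ℝ), HasDerivAt (fun τ' => f τ' x) (f' τ x) τ := by
    intro τ x
    have h1 : HasDerivAt (fun τ' => β (G (τ', x))) (β' (G (τ, x)) * ρt (τ, x)) τ :=
      (hβ' (G (τ, x))).comp τ (pd_fst hρsm τ x)
    have h2 : HasDerivAt (fun τ' => (θs (τ', x) - c₀) ^ 2)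
        (2 * (θs (τ, x) - c₀) * θst (τ, x)) τ := by
      have h := ((pd_fst smθs τ x).sub_const c₀).pow 2
      norm_num at h
      exact h
    have h3 : HasDerivAt (fun τ' => (ρs (τ', x)) ^ 2) (2 * ρs (τ, x) * ρst (τ, x)) τ := by
      have h := (pd_fst smρs τ x).pow 2
      norm_num at h
      exact h
    exact (h1.mul h2).add (h3.const_mul μ)
  have cf : Continuous (fun p : ℝ × ℝ => f p.1 p.2) := by
    have : (fun p : ℝ × ℝ => f p.1 p.2)
        = fun p : ℝ × ℝ => β (G p) * (θs p - c₀) ^ 2 + μ * (ρs p) ^ 2 := rfl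
    rw [this]
    exact ((hβc.comp cG).mul ((cθs.sub continuous_const).pow 2)).add
      (continuous_const.mul (cρs.pow 2))
  have cf' : Continuous (fun p : ℝ × ℝ => f' p.1 p.2) := by
    have : (fun p : ℝ × ℝ => f' p.1 p.2)
        = fun p : ℝ × ℝ => β' (G p) * ρt p * (θs p - c₀) ^ 2
            + β (G p) * (2 * (θs p - c₀) * θst p) + μ * (2 * ρs p * ρst p) := rfl
    rw [this]
    exact ((((hβ'c.comp cG).mul cρt).mul ((cθs.sub continuous_const).pow 2)).add
      ((hβc.comp cG).mul ((continuous_const.mul (cθs.sub continuous_const)).mul cθst))).add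
      (continuous_const.mul ((continuous_const.mul cρs).mul cρst))
  obtain ⟨Cb, hCb⟩ := (((isCompact_Icc (a := t - 1) (b := t + 1)).prod
      (isCompact_uIcc (a := (0:ℝ)) (b := L)))).exists_bound_of_continuousOn cf'.continuousOn
  have HH : HasDerivAt (fun τ => ∫ x in (0:ℝ)..L, f τ x) (∫ x in (0:ℝ)..L, f' t x) t := by
    refine (intervalIntegral.hasDerivAt_integral_of_dominated_loc_of_deriv_le
      (F := f) (F' := f') (x₀ := t) (a := 0) (b := L) (bound := fun _ => |Cb|) (Metric.ball_mem_nhds t one_pos)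
      (Filter.Eventually.of_forall fun τ =>
        ((cf.comp (continuous_const.prodMk continuous_id)).aestronglyMeasurable))
      ((cf.comp (continuous_const.prodMk continuous_id)).intervalIntegrable 0 L)
      (cf'.comp (continuous_const.prodMk continuous_id)).aestronglyMeasurable
      (Filter.Eventually.of_forall fun x hx τ' hτ' => ?_) intervalIntegrable_const
      (Filter.Eventually.of_forall fun x hx τ' hτ' => hdiff τ' x)).2
    have h1 : τ' ∈ Icc (t - 1) (t + 1) := by
      have := Metric.mem_ball.mp hτ'
      rw [Real.dist_eq] at this
      have := abs_lt.mp this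
      constructor <;> linarith [this.1, this.2]
    have h2 : x ∈ uIcc (0:ℝ) L := Set.Ioc_subset_Icc_self hx
    calc ‖f' τ' x‖ ≤ Cb := hCb (τ', x) (Set.mk_mem_prod h1 h2)
      _ ≤ |Cb| := le_abs_self Cb
  -- slice continuity of u, U
  have cu : Continuous u := by
    rw [hudef]; exact (hβc.comp (slice cG t)).mul ((slice cθs t).sub continuous_const)
  have cU : Continuous U := by
    rw [hUdef]
    exact (((hβ'c.comp (slice cG t)).mul (slice cρs t)).mul
      ((slice cθs t).sub continuous_const)).add ((hβc.comp (slice cG t)).mul (slice cθss t))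
  -- integration by parts
  have ibp1 : (∫ x in (0:ℝ)..L, u x * θst (t, x)) = - ∫ x in (0:ℝ)..L, U x * θt (t, x) := by
    have h := intervalIntegral.integral_mul_deriv_eq_deriv_mul
      (u := u) (v := fun x => θt (t, x)) (u' := U) (v' := fun x => θst (t, x))
      (fun x _ => hu' x) (fun x _ => dsθt x)
      (cU.intervalIntegrable 0 L) ((slice cθst t).intervalIntegrable 0 L)
    rw [h, hbu, hbθt]; ring
  have ibp2 : (∫ x in (0:ℝ)..L, ρs (t, x) * ρst (t, x))
      = - ∫ x in (0:ℝ)..L, ρss (t, x) * ρt (t, x) := by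
    have h := intervalIntegral.integral_mul_deriv_eq_deriv_mul
      (u := fun x => ρs (t, x)) (v := fun x => ρt (t, x))
      (u' := fun x => ρss (t, x)) (v' := fun x => ρst (t, x))
      (fun x _ => pd_snd smρs t x) (fun x _ => dsρt x)
      ((slice cρss t).intervalIntegrable 0 L) ((slice cρst t).intervalIntegrable 0 L)
    rw [h, hbρs, hbρt]; ring
  -- orthogonality relations
  have hlam₁' : (∫ x in (0:ℝ)..L, θt (t, x) * Real.sin (θ t x)) = 0 :=
    calc (∫ x in (0:ℝ)..L, θt (t, x) * Real.sin (θ t x))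
        = ∫ s in (0:ℝ)..L, deriv (fun τ => θ τ s) t * Real.sin (θ t s) :=
          intervalIntegral.integral_congr fun x hx => by rw [dtθ_eq]
      _ = 0 := hlam₁ t ht
  have hlam₂' : (∫ x in (0:ℝ)..L, θt (t, x) * Real.cos (θ t x)) = 0 :=
    calc (∫ x in (0:ℝ)..L, θt (t, x) * Real.cos (θ t x))
        = ∫ s in (0:ℝ)..L, deriv (fun τ => θ τ s) t * Real.cos (θ t s) :=
          intervalIntegral.integral_congr fun x hx => by rw [dtθ_eq]
      _ = 0 := hlam₂ t ht
  have hUθ : (∫ x in (0:ℝ)..L, U x * θt (t, x)) = ∫ x in (0:ℝ)..L, (θt (t, x)) ^ 2 := by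
    have e : EqOn (fun x => U x * θt (t, x))
        (fun x => (θt (t, x)) ^ 2 - lam₁ t * (θt (t, x) * Real.sin (θ t x))
          + lam₂ t * (θt (t, x) * Real.cos (θ t x))) (uIcc (0:ℝ) L) := by
      intro x hx
      rw [uIcc_of_le hL.le] at hx
      have h := pdeθ' x hx
      have h2 : U x = θt (t, x) - lam₁ t * Real.sin (θ t x) + lam₂ t * Real.cos (θ t x) := by
        linarith
      simp only []
      rw [h2]; ring
    have i1 : IntervalIntegrable (fun x => (θt (t, x)) ^ 2) MeasureTheory.volume 0 L :=
      ((slice cθt t).pow 2).intervalIntegrable 0 L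
    have i2 : IntervalIntegrable (fun x => lam₁ t * (θt (t, x) * Real.sin (θ t x)))
        MeasureTheory.volume 0 L :=
      (continuous_const.mul ((slice cθt t).mul
        (Real.continuous_sin.comp (slice cF t)))).intervalIntegrable 0 L
    have i3 : IntervalIntegrable (fun x => lam₂ t * (θt (t, x) * Real.cos (θ t x)))
        MeasureTheory.volume 0 L :=
      (continuous_const.mul ((slice cθt t).mul
        (Real.continuous_cos.comp (slice cF t)))).intervalIntegrable 0 L
    rw [intervalIntegral.integral_congr e,
      intervalIntegral.integral_add (i1.sub i2) i3, intervalIntegral.integral_sub i1 i2,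
      intervalIntegral.integral_const_mul, intervalIntegral.integral_const_mul, hlam₁', hlam₂']
    ring
  -- conservation of mass
  have hSS : (∫ x in (0:ℝ)..L, ρss (t, x)) = ρs (t, L) - ρs (t, 0) :=
    intervalIntegral.integral_eq_sub_of_hasDerivAt (fun x _ => pd_snd smρs t x)
      ((slice cρss t).intervalIntegrable 0 L)
  have hlamρ' : lamρ t
      = -(1 / (2 * L)) * ∫ x in (0:ℝ)..L, β' (G (t, x)) * (θs (t, x) - c₀) ^ 2 := by
    rw [hlamρ t ht]
    congr 1
    exact intervalIntegral.integral_congr fun x hx => by rw [dθ_eq]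
  have hmass : (∫ x in (0:ℝ)..L, ρt (t, x)) = 0 := by
    have e : EqOn (fun x => ρt (t, x))
        (fun x => μ * ρss (t, x) - (1 / 2) * (β' (G (t, x)) * (θs (t, x) - c₀) ^ 2) - lamρ t)
        (uIcc (0:ℝ) L) := by
      intro x hx
      rw [uIcc_of_le hL.le] at hx
      have h := pdeρ' x hx
      simp only []
      linarith
    have i1 : IntervalIntegrable (fun x => μ * ρss (t, x)) MeasureTheory.volume 0 L :=
      (continuous_const.mul (slice cρss t)).intervalIntegrable 0 L
    have i2 : IntervalIntegrable
        (fun x => (1 / 2 : ℝ) * (β' (G (t, x)) * (θs (t, x) - c₀) ^ 2))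
        MeasureTheory.volume 0 L :=
      (continuous_const.mul ((hβ'c.comp (slice cG t)).mul
        (((slice cθs t).sub continuous_const).pow 2))).intervalIntegrable 0 L
    rw [intervalIntegral.integral_congr e,
      intervalIntegral.integral_sub (i1.sub i2) intervalIntegrable_const,
      intervalIntegral.integral_sub i1 i2,
      intervalIntegral.integral_const_mul, intervalIntegral.integral_const_mul,
      intervalIntegral.integral_const, hSS, hbρs, hlamρ']
    have hLne : L ≠ 0 := ne_of_gt hL
    generalize (∫ x in (0:ℝ)..L, β' (G (t, x)) * (θs (t, x) - c₀) ^ 2) = I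
    rw [smul_eq_mul]
    field_simp
    ring
  -- the ρ-part of the dissipation
  have hRρ : (∫ x in (0:ℝ)..L,
      ((1 / 2) * (β' (G (t, x)) * ρt (t, x) * (θs (t, x) - c₀) ^ 2)
        - μ * (ρss (t, x) * ρt (t, x))))
      = - ∫ x in (0:ℝ)..L, (ρt (t, x)) ^ 2 := by
    have e : EqOn (fun x => (1 / 2) * (β' (G (t, x)) * ρt (t, x) * (θs (t, x) - c₀) ^ 2)
          - μ * (ρss (t, x) * ρt (t, x)))
        (fun x => -((ρt (t, x)) ^ 2) - lamρ t * ρt (t, x)) (uIcc (0:ℝ) L) := by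
      intro x hx
      rw [uIcc_of_le hL.le] at hx
      have h := pdeρ' x hx
      have h2 : (1 / 2) * (β' (G (t, x)) * (θs (t, x) - c₀) ^ 2) - μ * ρss (t, x)
          = -ρt (t, x) - lamρ t := by linarith
      simp only []
      calc (1 / 2) * (β' (G (t, x)) * ρt (t, x) * (θs (t, x) - c₀) ^ 2)
            - μ * (ρss (t, x) * ρt (t, x))
          = ρt (t, x) * ((1 / 2) * (β' (G (t, x)) * (θs (t, x) - c₀) ^ 2)
              - μ * ρss (t, x)) := by ring
        _ = ρt (t, x) * (-ρt (t, x) - lamρ t) := by rw [h2]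
        _ = -((ρt (t, x)) ^ 2) - lamρ t * ρt (t, x) := by ring
    have i1 : IntervalIntegrable (fun x => -((ρt (t, x)) ^ 2)) MeasureTheory.volume 0 L :=
      (((slice cρt t).pow 2).neg).intervalIntegrable 0 L
    have i2 : IntervalIntegrable (fun x => lamρ t * ρt (t, x)) MeasureTheory.volume 0 L :=
      (continuous_const.mul (slice cρt t)).intervalIntegrable 0 L
    rw [intervalIntegral.integral_congr e, intervalIntegral.integral_sub i1 i2,
      intervalIntegral.integral_neg, intervalIntegral.integral_const_mul, hmass]
    ring
  -- identifications of the goal integrals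
  have goalθ : (∫ s in (0:ℝ)..L, (deriv (fun τ => θ τ s) t) ^ 2)
      = ∫ x in (0:ℝ)..L, (θt (t, x)) ^ 2 :=
    intervalIntegral.integral_congr fun x hx => by rw [dtθ_eq]
  have goalρ : (∫ s in (0:ℝ)..L, (deriv (fun τ => ρ τ s) t) ^ 2)
      = ∫ x in (0:ℝ)..L, (ρt (t, x)) ^ 2 :=
    intervalIntegral.integral_congr fun x hx => by rw [dtρ_eq]
  -- splitting the integral of f'
  have iP : IntervalIntegrable (fun x => β' (G (t, x)) * ρt (t, x) * (θs (t, x) - c₀) ^ 2)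
      MeasureTheory.volume 0 L :=
    (((hβ'c.comp (slice cG t)).mul (slice cρt t)).mul
      (((slice cθs t).sub continuous_const).pow 2)).intervalIntegrable 0 L
  have iQ : IntervalIntegrable (fun x => 2 * (u x * θst (t, x))) MeasureTheory.volume 0 L :=
    (continuous_const.mul (cu.mul (slice cθst t))).intervalIntegrable 0 L
  have iR : IntervalIntegrable (fun x => (2 * μ) * (ρs (t, x) * ρst (t, x)))
      MeasureTheory.volume 0 L :=
    (continuous_const.mul ((slice cρs t).mul (slice cρst t))).intervalIntegrable 0 L
  have split : (∫ x in (0:ℝ)..L, f' t x)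
      = (∫ x in (0:ℝ)..L, β' (G (t, x)) * ρt (t, x) * (θs (t, x) - c₀) ^ 2)
        + 2 * (∫ x in (0:ℝ)..L, u x * θst (t, x))
        + (2 * μ) * (∫ x in (0:ℝ)..L, ρs (t, x) * ρst (t, x)) := by
    have e : EqOn (fun x => f' t x)
        (fun x => β' (G (t, x)) * ρt (t, x) * (θs (t, x) - c₀) ^ 2
          + 2 * (u x * θst (t, x)) + (2 * μ) * (ρs (t, x) * ρst (t, x))) (uIcc (0:ℝ) L) := by
      intro x _
      simp only [hf'def, hudef]
      ring
    rw [intervalIntegral.integral_congr e,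
      intervalIntegral.integral_add (iP.add iQ) iR, intervalIntegral.integral_add iP iQ,
      intervalIntegral.integral_const_mul, intervalIntegral.integral_const_mul]
  have iP2 : IntervalIntegrable
      (fun x => (1 / 2 : ℝ) * (β' (G (t, x)) * ρt (t, x) * (θs (t, x) - c₀) ^ 2))
      MeasureTheory.volume 0 L := iP.const_mul (1 / 2)
  have iS2 : IntervalIntegrable (fun x => μ * (ρss (t, x) * ρt (t, x)))
      MeasureTheory.volume 0 L :=
    (continuous_const.mul ((slice cρss t).mul (slice cρt t))).intervalIntegrable 0 L
  have comb : (1 / 2) * (∫ x in (0:ℝ)..L, β' (G (t, x)) * ρt (t, x) * (θs (t, x) - c₀) ^ 2)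
        - μ * (∫ x in (0:ℝ)..L, ρss (t, x) * ρt (t, x))
      = ∫ x in (0:ℝ)..L,
          ((1 / 2) * (β' (G (t, x)) * ρt (t, x) * (θs (t, x) - c₀) ^ 2)
            - μ * (ρss (t, x) * ρt (t, x))) := by
    rw [intervalIntegral.integral_sub iP2 iS2,
      intervalIntegral.integral_const_mul, intervalIntegral.integral_const_mul]
  -- rewriting the energy functional
  have hfun : (fun τ => (1 / 2) * ∫ s in (0:ℝ)..L,
      (β (ρ τ s) * (deriv (θ τ) s - c₀) ^ 2 + μ * (deriv (ρ τ) s) ^ 2))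
      = fun τ => (1 / 2) * ∫ x in (0:ℝ)..L, f τ x := by
    funext τ
    congr 1
    refine intervalIntegral.integral_congr fun x hx => ?_
    simp only [hfdef, hGdef]
    rw [dθ_eq, dρ_eq]
  -- the value of the derivative
  have hval : (1 / 2) * (∫ x in (0:ℝ)..L, f' t x)
      = (-(∫ s in (0:ℝ)..L, (deriv (fun τ => θ τ s) t) ^ 2)
          - ∫ s in (0:ℝ)..L, (deriv (fun τ => ρ τ s) t) ^ 2) := by
    rw [goalθ, goalρ, split, ibp1, ibp2, hUθ]
    have h := hRρ
    rw [← comb] at h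
    linarith
  constructor
  · rw [hfun, ← hval]
    exact HH.const_mul (1 / 2 : ℝ)
  · have h1 : 0 ≤ ∫ s in (0:ℝ)..L, (deriv (fun τ => θ τ s) t) ^ 2 :=
      intervalIntegral.integral_nonneg hL.le (fun x _ => sq_nonneg _)
    have h2 : 0 ≤ ∫ s in (0:ℝ)..L, (deriv (fun τ => ρ τ s) t) ^ 2 :=
      intervalIntegral.integral_nonneg hL.le (fun x _ => sq_nonneg _)
    linarith
end

section
/- Let L = 2π, c₀ ≠ 1, ω = 1, β(x) = (x²−1)² + c with c > 0, θ₀(s) = s, ρ₀(s) = sin s. For the solution of the gradient-flow system with this initial datum, the Lagrange multipliers vanish at t = 0 and d/dt[(1/2)∫₀^{2π} β(ρ)(∂_s θ − c₀)² ds] at t = 0 equals (π/2)(1−c₀)²(μ − (1−c₀)² − 5/2), which is positive whenever μ > (1−c₀)² + 5/2. -/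
open Real Set

private theorem aux_ps (f : ℝ × ℝ → ℝ) (hf : ContDiff ℝ (⊤ : ℕ∞) f) (t s : ℝ) :
    HasDerivAt (fun x => f (t, x)) (fderiv ℝ f (t, s) (0, 1)) s :=
  (hf.differentiable (by simp) (t, s)).hasFDerivAt.comp_hasDerivAt s
    ((hasDerivAt_const s t).prodMk (hasDerivAt_id s))

private theorem aux_pt (f : ℝ × ℝ → ℝ) (hf : ContDiff ℝ (⊤ : ℕ∞) f) (t s : ℝ) :
    HasDerivAt (fun τ => f (τ, s)) (fderiv ℝ f (t, s) (1, 0)) t :=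
  (hf.differentiable (by simp) (t, s)).hasFDerivAt.comp_hasDerivAt t
    ((hasDerivAt_id t).prodMk (hasDerivAt_const t s))

private theorem aux_smooth_ps (f : ℝ × ℝ → ℝ) (hf : ContDiff ℝ (⊤ : ℕ∞) f) :
    ContDiff ℝ (⊤ : ℕ∞) (fun p => fderiv ℝ f p (0, 1)) :=
  (hf.fderiv_right (by simp)).clm_apply contDiff_const

private theorem aux_mixed (f : ℝ × ℝ → ℝ) (hf : ContDiff ℝ (⊤ : ℕ∞) f) (t s : ℝ) :
    HasDerivAt (fun τ => fderiv ℝ f (τ, s) (0, 1))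
      (fderiv ℝ (fderiv ℝ f) (t, s) (1, 0) (0, 1)) t := by
  have hg : ContDiff ℝ (⊤ : ℕ∞) (fderiv ℝ f) := hf.fderiv_right (by simp)
  have h1 : HasFDerivAt (fderiv ℝ f) (fderiv ℝ (fderiv ℝ f) (t, s)) (t, s) :=
    (hg.differentiable (by simp) (t, s)).hasFDerivAt
  have h2 := h1.clm_apply (hasFDerivAt_const ((0 : ℝ), (1 : ℝ)) ((t, s) : ℝ × ℝ))
  have h3 := h2.comp_hasDerivAt t ((hasDerivAt_id t).prodMk (hasDerivAt_const t s))
  refine h3.congr_deriv ?_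
  simp

private theorem aux_mixed2 (f : ℝ × ℝ → ℝ) (hf : ContDiff ℝ (⊤ : ℕ∞) f) (t s : ℝ) :
    HasDerivAt (fun x => fderiv ℝ f (t, x) (1, 0))
      (fderiv ℝ (fderiv ℝ f) (t, s) (0, 1) (1, 0)) s := by
  have hg : ContDiff ℝ (⊤ : ℕ∞) (fderiv ℝ f) := hf.fderiv_right (by simp)
  have h1 : HasFDerivAt (fderiv ℝ f) (fderiv ℝ (fderiv ℝ f) (t, s)) (t, s) :=
    (hg.differentiable (by simp) (t, s)).hasFDerivAt
  have h2 := h1.clm_apply (hasFDerivAt_const ((1 : ℝ), (0 : ℝ)) ((t, s) : ℝ × ℝ))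
  have h3 := h2.comp_hasDerivAt s ((hasDerivAt_const s t).prodMk (hasDerivAt_id s))
  refine h3.congr_deriv ?_
  simp

private theorem aux_sym (f : ℝ × ℝ → ℝ) (hf : ContDiff ℝ (⊤ : ℕ∞) f) (t s : ℝ) (v w : ℝ × ℝ) :
    fderiv ℝ (fderiv ℝ f) (t, s) v w = fderiv ℝ (fderiv ℝ f) (t, s) w v := by
  have hg : ContDiff ℝ (⊤ : ℕ∞) (fderiv ℝ f) := hf.fderiv_right (by simp)
  exact second_derivative_symmetric
    (fun y => (hf.differentiable (by simp) y).hasFDerivAt)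
    ((hg.differentiable (by simp) (t, s)).hasFDerivAt) v w

theorem stmt_11 (T μ c₀ c : ℝ) (hT : 0 < T) (hμ : 0 < μ) (hc₀ : c₀ ≠ 1) (hc : 0 < c)
    (β β' : ℝ → ℝ)
    (hβ : β = fun x => (x ^ 2 - 1) ^ 2 + c)
    (hβ' : ∀ x, HasDerivAt β (β' x) x)
    (θ ρ : ℝ → ℝ → ℝ) (θt ρt : ℝ → ℝ → ℝ)
    (hθsm : ContDiff ℝ (⊤ : ℕ∞) (fun p : ℝ × ℝ => θ p.1 p.2))
    (hρsm : ContDiff ℝ (⊤ : ℕ∞) (fun p : ℝ × ℝ => ρ p.1 p.2))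
    (hθt : ∀ t ∈ Ico 0 T, ∀ s, HasDerivWithinAt (fun τ => θ τ s) (θt t s) (Ici 0) t)
    (hρt : ∀ t ∈ Ico 0 T, ∀ s, HasDerivWithinAt (fun τ => ρ τ s) (ρt t s) (Ici 0) t)
    -- initial datum
    (hθ0 : ∀ s, θ 0 s = s) (hρ0 : ∀ s, ρ 0 s = Real.sin s)
    (lam₁ lam₂ lamρ : ℝ → ℝ)
    -- the evolution equations on [0,T) × [0,2π]
    (hpdeθ : ∀ t ∈ Ico 0 T, ∀ s ∈ Icc 0 (2 * π),
      θt t s = deriv (fun x => β (ρ t x) * (deriv (θ t) x - c₀)) s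
        + lam₁ t * Real.sin (θ t s) - lam₂ t * Real.cos (θ t s))
    (hpdeρ : ∀ t ∈ Ico 0 T, ∀ s ∈ Icc 0 (2 * π),
      ρt t s = μ * deriv (deriv (ρ t)) s
        - (1 / 2) * β' (ρ t s) * (deriv (θ t) s - c₀) ^ 2 - lamρ t)
    -- the nonlocal Lagrange multipliers
    (hlamρ : ∀ t ∈ Ico 0 T, lamρ t =
      -(1 / (2 * (2 * π))) * ∫ s in (0:ℝ)..(2 * π), β' (ρ t s) * (deriv (θ t) s - c₀) ^ 2)
    (hlam₁ : ∀ t ∈ Ico 0 T, (∫ s in (0:ℝ)..(2 * π), θt t s * Real.sin (θ t s)) = 0)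
    (hlam₂ : ∀ t ∈ Ico 0 T, (∫ s in (0:ℝ)..(2 * π), θt t s * Real.cos (θ t s)) = 0) :
    lam₁ 0 = 0 ∧ lam₂ 0 = 0 ∧ lamρ 0 = 0 ∧
    HasDerivWithinAt
      (fun t => (1 / 2) * ∫ s in (0:ℝ)..(2 * π), β (ρ t s) * (deriv (θ t) s - c₀) ^ 2)
      ((π / 2) * (1 - c₀) ^ 2 * (μ - (1 - c₀) ^ 2 - 5 / 2)) (Ici 0) 0 ∧
    ((1 - c₀) ^ 2 + 5 / 2 < μ →
      0 < (π / 2) * (1 - c₀) ^ 2 * (μ - (1 - c₀) ^ 2 - 5 / 2)) := by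
  have pi_pos := Real.pi_pos
  have h2π : (0:ℝ) ≤ 2 * π := by positivity
  have h0T : (0:ℝ) ∈ Ico 0 T := ⟨le_rfl, hT⟩
  have hθ0f : θ 0 = fun x => x := funext hθ0
  have hρ0f : ρ 0 = Real.sin := funext hρ0
  have hβ'v : β' = fun x => 4 * x ^ 3 - 4 * x := by
    funext x
    refine (hβ' x).unique ?_
    rw [hβ]
    have h := (((hasDerivAt_id' (x := x)).fun_pow 2).sub_const 1).fun_pow 2 |>.add_const c
    refine h.congr_deriv (Eq.symm ?_)
    ring
  have hdθ0 : deriv (θ 0) = fun _ => (1:ℝ) := by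
    funext x
    rw [hθ0f]
    simp
  -- the deriv term at t = 0
  have hEd : ∀ s : ℝ, deriv (fun x => β (ρ 0 x) * (deriv (θ 0) x - c₀)) s
      = 4 * (1 - c₀) * (Real.sin s ^ 2 - 1) * (Real.sin s * Real.cos s) := by
    intro s
    have hfe : (fun x => β (ρ 0 x) * (deriv (θ 0) x - c₀))
        = fun x => ((Real.sin x ^ 2 - 1) ^ 2 + c) * (1 - c₀) := by
      funext x
      rw [hβ, hρ0f, hdθ0]
    rw [hfe]
    have h := ((((Real.hasDerivAt_sin s).fun_pow 2).sub_const 1).fun_pow 2).add_const c |>.mul_const (1 - c₀)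
    rw [h.deriv]
    ring
  have hθt0 : ∀ s ∈ Icc 0 (2 * π), θt 0 s
      = 4 * (1 - c₀) * (Real.sin s ^ 2 - 1) * (Real.sin s * Real.cos s)
        + lam₁ 0 * Real.sin s - lam₂ 0 * Real.cos s := by
    intro s hs
    rw [hpdeθ 0 h0T s hs, hEd s, hθ0 s]
  -- lam₁ = 0
  have hl1 : lam₁ 0 = 0 := by
    have hint := hlam₁ 0 h0T
    have hcg : EqOn (fun s => θt 0 s * Real.sin (θ 0 s))
        (fun s => (4 * (1 - c₀) * (Real.sin s ^ 2 - 1) * (Real.sin s * Real.cos s)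
          + lam₁ 0 * Real.sin s - lam₂ 0 * Real.cos s) * Real.sin s) (uIcc 0 (2 * π)) := by
      intro s hs
      rw [uIcc_of_le h2π] at hs
      simp only
      rw [hθt0 s hs, hθ0 s]
    rw [intervalIntegral.integral_congr hcg] at hint
    have hQ : ∀ x ∈ uIcc (0:ℝ) (2 * π),
        HasDerivAt (fun x => ((-4) * (1 - c₀)) * (-(Real.sin x * Real.cos x ^ 4) / 5
            + Real.sin x * Real.cos x ^ 2 / 15 + 2 * Real.sin x / 15)
          + lam₁ 0 * (x / 2 - Real.sin x * Real.cos x / 2) - lam₂ 0 * (Real.sin x ^ 2 / 2))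
        ((4 * (1 - c₀) * (Real.sin x ^ 2 - 1) * (Real.sin x * Real.cos x)
          + lam₁ 0 * Real.sin x - lam₂ 0 * Real.cos x) * Real.sin x) x := by
      intro x _
      have h := (((((Real.hasDerivAt_sin x).mul ((Real.hasDerivAt_cos x).fun_pow 4)).neg.div_const 5).add
          (((Real.hasDerivAt_sin x).mul ((Real.hasDerivAt_cos x).fun_pow 2)).div_const 15)).add
          (((Real.hasDerivAt_sin x).const_mul 2).div_const 15)).const_mul ((-4) * (1 - c₀)) |>.add
          ((((hasDerivAt_id' (x := x)).div_const 2).sub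
            (((Real.hasDerivAt_sin x).mul (Real.hasDerivAt_cos x)).div_const 2)).const_mul (lam₁ 0)) |>.sub
          ((((Real.hasDerivAt_sin x).fun_pow 2).div_const 2).const_mul (lam₂ 0))
      refine h.congr_deriv (Eq.symm ?_)
      linear_combination ((1/2:ℝ) * lam₁ 0 + (-8/15:ℝ) * Real.cos x * (1 - c₀)
        + (-4/5:ℝ) * Real.cos x ^ 3 * (1 - c₀)
        + (4:ℝ) * Real.sin x ^ 2 * Real.cos x * (1 - c₀)) * Real.sin_sq_add_cos_sq x
    rw [intervalIntegral.integral_eq_sub_of_hasDerivAt hQ (by apply Continuous.intervalIntegrable; fun_prop)] at hint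
    simp only [Real.sin_two_pi, Real.cos_two_pi, Real.sin_zero, Real.cos_zero] at hint
    have h' : lam₁ 0 * π = 0 := by linear_combination hint
    exact (mul_eq_zero.mp h').resolve_right Real.pi_ne_zero
  have hl2 : lam₂ 0 = 0 := by
    have hint := hlam₂ 0 h0T
    have hcg : EqOn (fun s => θt 0 s * Real.cos (θ 0 s))
        (fun s => (4 * (1 - c₀) * (Real.sin s ^ 2 - 1) * (Real.sin s * Real.cos s)
          + lam₁ 0 * Real.sin s - lam₂ 0 * Real.cos s) * Real.cos s) (uIcc 0 (2 * π)) := by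
      intro s hs
      rw [uIcc_of_le h2π] at hs
      simp only
      rw [hθt0 s hs, hθ0 s]
    rw [intervalIntegral.integral_congr hcg] at hint
    have hQ : ∀ x ∈ uIcc (0:ℝ) (2 * π),
        HasDerivAt (fun x => ((-4) * (1 - c₀)) * (-(Real.cos x ^ 5) / 5)
          + lam₁ 0 * (Real.sin x ^ 2 / 2)
          - lam₂ 0 * (Real.sin x * Real.cos x / 2 + x / 2))
        ((4 * (1 - c₀) * (Real.sin x ^ 2 - 1) * (Real.sin x * Real.cos x)
          + lam₁ 0 * Real.sin x - lam₂ 0 * Real.cos x) * Real.cos x) x := by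
      intro x _
      have h := ((((Real.hasDerivAt_cos x).fun_pow 5).neg.div_const 5).const_mul ((-4) * (1 - c₀))).add
          ((((Real.hasDerivAt_sin x).fun_pow 2).div_const 2).const_mul (lam₁ 0)) |>.sub
          (((((Real.hasDerivAt_sin x).mul (Real.hasDerivAt_cos x)).div_const 2).add
            ((hasDerivAt_id' (x := x)).div_const 2)).const_mul (lam₂ 0))
      refine h.congr_deriv (Eq.symm ?_)
      linear_combination ((-1/2:ℝ) * lam₂ 0
        + (4:ℝ) * Real.sin x * Real.cos x ^ 2 * (1 - c₀)) * Real.sin_sq_add_cos_sq x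
    rw [intervalIntegral.integral_eq_sub_of_hasDerivAt hQ
      (by apply Continuous.intervalIntegrable; fun_prop)] at hint
    simp only [Real.sin_two_pi, Real.cos_two_pi, Real.sin_zero, Real.cos_zero] at hint
    have h' : lam₂ 0 * π = 0 := by linear_combination -hint
    exact (mul_eq_zero.mp h').resolve_right Real.pi_ne_zero
  have hlρ : lamρ 0 = 0 := by
    have hint := hlamρ 0 h0T
    have hcg : EqOn (fun s => β' (ρ 0 s) * (deriv (θ 0) s - c₀) ^ 2)
        (fun s => (4 * Real.sin s ^ 3 - 4 * Real.sin s) * (1 - c₀) ^ 2) (uIcc 0 (2 * π)) := by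
      intro s _
      simp only [hβ'v, hρ0f, hdθ0]
    rw [intervalIntegral.integral_congr hcg] at hint
    have hQ : ∀ x ∈ uIcc (0:ℝ) (2 * π),
        HasDerivAt (fun x => 4 * Real.cos x ^ 3 / 3 * (1 - c₀) ^ 2)
        ((4 * Real.sin x ^ 3 - 4 * Real.sin x) * (1 - c₀) ^ 2) x := by
      intro x _
      have h := ((((Real.hasDerivAt_cos x).fun_pow 3).const_mul 4).div_const 3).mul_const ((1 - c₀) ^ 2)
      refine h.congr_deriv (Eq.symm ?_)
      linear_combination ((4:ℝ) * Real.sin x * (1 - c₀) ^ 2) * Real.sin_sq_add_cos_sq x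
    rw [intervalIntegral.integral_eq_sub_of_hasDerivAt hQ
      (by apply Continuous.intervalIntegrable; fun_prop)] at hint
    simp only [Real.sin_two_pi, Real.cos_two_pi, Real.sin_zero, Real.cos_zero] at hint
    rw [hint]
    ring
  -- ============ the energy derivative ============
  refine ⟨hl1, hl2, hlρ, ?_, ?_⟩
  · -- smoothness of β
    have hβsm : ContDiff ℝ (⊤ : ℕ∞) β := by
      rw [hβ]
      exact (((contDiff_id.pow 2).sub contDiff_const).pow 2).add contDiff_const
    set Θ : ℝ × ℝ → ℝ := fun p => θ p.1 p.2 with hΘ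
    set R : ℝ × ℝ → ℝ := fun p => ρ p.1 p.2 with hR
    set F : ℝ × ℝ → ℝ := fun p => β (R p) * (fderiv ℝ Θ p (0, 1) - c₀) ^ 2 with hF
    have hFsm : ContDiff ℝ (⊤ : ℕ∞) F :=
      (hβsm.comp hρsm).mul (((aux_smooth_ps Θ hθsm).sub contDiff_const).pow 2)
    set F' : ℝ × ℝ → ℝ := fun p => fderiv ℝ F p (1, 0) with hF'
    have hF'sm : ContDiff ℝ (⊤ : ℕ∞) F' := (hFsm.fderiv_right (by simp)).clm_apply contDiff_const
    have hF'c : Continuous F' := hF'sm.continuous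
    -- uniform bound on the compact set
    obtain ⟨C, hC⟩ := (isCompact_Icc.prod isCompact_uIcc :
        IsCompact ((Icc (-1 : ℝ) 1) ×ˢ uIcc (0:ℝ) (2 * π))).exists_bound_of_continuousOn
      hF'c.continuousOn
    -- differentiation under the integral sign
    have hbig : HasDerivAt (fun x : ℝ => ∫ s in (0:ℝ)..(2 * π), F (x, s))
        (∫ s in (0:ℝ)..(2 * π), F' (0, s)) 0 := by
      refine (intervalIntegral.hasDerivAt_integral_of_dominated_loc_of_deriv_le
        (F := fun x s => F (x, s)) (F' := fun x s => F' (x, s)) (x₀ := (0:ℝ))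
        (a := 0) (b := 2 * π) (bound := fun _ => C) (s := Metric.ball 0 1) (Metric.ball_mem_nhds 0 one_pos)
        ?_ ?_ ?_ ?_ ?_ ?_).2
      · exact Filter.Eventually.of_forall fun x =>
          (hFsm.continuous.comp (continuous_const.prodMk continuous_id)).aestronglyMeasurable
      · exact (hFsm.continuous.comp (continuous_const.prodMk continuous_id)).intervalIntegrable _ _
      · exact (hF'c.comp (continuous_const.prodMk continuous_id)).aestronglyMeasurable
      · refine Filter.Eventually.of_forall fun s hs x hx => hC (x, s) ?_
        constructor
        · have := mem_ball_zero_iff.mp hx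
          exact abs_le.mp this.le
        · rw [uIoc_of_le h2π] at hs
          rw [uIcc_of_le h2π]
          exact Ioc_subset_Icc_self hs
      · exact intervalIntegrable_const
      · exact Filter.Eventually.of_forall fun s hs x hx => aux_pt F hFsm x s
    -- identify F' (0, s) on the open interval
    have hθtT : ∀ x : ℝ, θt 0 x = fderiv ℝ Θ (0, x) (1, 0) := fun x =>
      (uniqueDiffOn_Ici (0:ℝ) 0 self_mem_Ici).eq_deriv _ (hθt 0 h0T x)
        (aux_pt Θ hθsm 0 x).hasDerivWithinAt
    have hSθ1 : ∀ x : ℝ, fderiv ℝ Θ (0, x) (0, 1) = 1 := by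
      intro x
      have h1 : HasDerivAt (θ 0) (fderiv ℝ Θ (0, x) (0, 1)) x := aux_ps Θ hθsm 0 x
      have h2 : HasDerivAt (θ 0) 1 x := by rw [hθ0f]; exact hasDerivAt_id' (x := x)
      exact h1.unique h2
    have hkey : ∀ s ∈ Ioo (0:ℝ) (2 * π), F' (0, s)
        = (4 * Real.sin s ^ 3 - 4 * Real.sin s)
            * (μ * (-Real.sin s) - 1 / 2 * (4 * Real.sin s ^ 3 - 4 * Real.sin s) * (1 - c₀) ^ 2)
            * (1 - c₀) ^ 2
          + ((Real.sin s ^ 2 - 1) ^ 2 + c) * (2 * (1 - c₀)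
            * (4 * (1 - c₀) * ((2 * Real.sin s * Real.cos s) * (Real.sin s * Real.cos s)
              + (Real.sin s ^ 2 - 1) * (Real.cos s ^ 2 - Real.sin s ^ 2)))) := by
      intro s hs
      have hsI : s ∈ Icc 0 (2 * π) := Ioo_subset_Icc_self hs
      -- time derivative of ρ at 0
      have hρval : fderiv ℝ R (0, s) (1, 0) = ρt 0 s :=
        (uniqueDiffOn_Ici (0:ℝ) 0 self_mem_Ici).eq_deriv _
          (aux_pt R hρsm 0 s).hasDerivWithinAt (hρt 0 h0T s)
      have hρpt : HasDerivAt (fun τ => ρ τ s) (ρt 0 s) 0 := hρval ▸ aux_pt R hρsm 0 s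
      have hρtv : ρt 0 s = μ * (-Real.sin s)
          - 1 / 2 * (4 * Real.sin s ^ 3 - 4 * Real.sin s) * (1 - c₀) ^ 2 := by
        rw [hpdeρ 0 h0T s hsI, hlρ, hβ'v, hρ0f, hdθ0, Real.deriv_sin, Real.deriv_cos']
        ring
      -- chain rule for β ∘ ρ
      have h1 : HasDerivAt (fun τ => β (ρ τ s)) (β' (Real.sin s) * ρt 0 s) 0 := by
        have h := (hβ' (ρ 0 s)).comp 0 hρpt
        rw [hρ0 s] at h
        exact h
      -- mixed second derivative
      have hmix2 : HasDerivAt (θt 0) (fderiv ℝ (fderiv ℝ Θ) (0, s) (0, 1) (1, 0)) s :=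
        (aux_mixed2 Θ hθsm 0 s).congr_of_eventuallyEq
          (Filter.Eventually.of_forall fun x => hθtT x)
      have hEdD : HasDerivAt (θt 0)
          (4 * (1 - c₀) * ((2 * Real.sin s * Real.cos s) * (Real.sin s * Real.cos s)
            + (Real.sin s ^ 2 - 1) * (Real.cos s ^ 2 - Real.sin s ^ 2))) s := by
        have hev : θt 0 =ᶠ[nhds s]
            (fun x => 4 * (1 - c₀) * (Real.sin x ^ 2 - 1) * (Real.sin x * Real.cos x)) := by
          filter_upwards [Ioo_mem_nhds hs.1 hs.2] with x hx
          rw [hθt0 x (Ioo_subset_Icc_self hx), hl1, hl2]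
          ring
        have h := ((((Real.hasDerivAt_sin s).fun_pow 2).sub_const 1).const_mul (4 * (1 - c₀))).fun_mul
          ((Real.hasDerivAt_sin s).fun_mul (Real.hasDerivAt_cos s))
        have h' : HasDerivAt
            (fun x => 4 * (1 - c₀) * (Real.sin x ^ 2 - 1) * (Real.sin x * Real.cos x))
            (4 * (1 - c₀) * ((2 * Real.sin s * Real.cos s) * (Real.sin s * Real.cos s)
              + (Real.sin s ^ 2 - 1) * (Real.cos s ^ 2 - Real.sin s ^ 2))) s := by
          refine h.congr_deriv (Eq.symm ?_)
          ring
        exact HasDerivAt.congr_of_eventuallyEq h' hev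
      have hmixv : fderiv ℝ (fderiv ℝ Θ) (0, s) (0, 1) (1, 0)
          = 4 * (1 - c₀) * ((2 * Real.sin s * Real.cos s) * (Real.sin s * Real.cos s)
            + (Real.sin s ^ 2 - 1) * (Real.cos s ^ 2 - Real.sin s ^ 2)) := hmix2.unique hEdD
      -- the product rule for F in the t-direction
      have h2 : HasDerivAt (fun τ => (fderiv ℝ Θ (τ, s) (0, 1) - c₀) ^ 2)
          (2 * (fderiv ℝ Θ (0, s) (0, 1) - c₀) ^ 1
            * (fderiv ℝ (fderiv ℝ Θ) (0, s) (1, 0) (0, 1))) 0 :=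
        ((aux_mixed Θ hθsm 0 s).sub_const c₀).fun_pow 2
      have hprod := h1.mul h2
      have hFd : HasDerivAt (fun τ => F (τ, s)) (F' (0, s)) 0 := aux_pt F hFsm 0 s
      have huniq := hFd.unique hprod
      rw [huniq, hρ0 s, hβ'v, hβ, hSθ1 s, aux_sym Θ hθsm 0 s (1, 0) (0, 1), hmixv, hρtv]
      ring
    -- both sides are continuous, so equality extends to the closed interval
    have hC1 : Continuous (fun s => F' (0, s)) :=
      hF'c.comp (continuous_const.prodMk continuous_id)
    have hEq : EqOn (fun s => F' (0, s))
        (fun s => (4 * Real.sin s ^ 3 - 4 * Real.sin s)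
            * (μ * (-Real.sin s) - 1 / 2 * (4 * Real.sin s ^ 3 - 4 * Real.sin s) * (1 - c₀) ^ 2)
            * (1 - c₀) ^ 2
          + ((Real.sin s ^ 2 - 1) ^ 2 + c) * (2 * (1 - c₀)
            * (4 * (1 - c₀) * ((2 * Real.sin s * Real.cos s) * (Real.sin s * Real.cos s)
              + (Real.sin s ^ 2 - 1) * (Real.cos s ^ 2 - Real.sin s ^ 2)))))
        (uIcc (0:ℝ) (2 * π)) := by
      rw [uIcc_of_le h2π, ← closure_Ioo (ne_of_lt (by positivity : (0:ℝ) < 2 * π))]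
      exact Set.EqOn.closure hkey hC1 (by fun_prop)
    -- compute the integral of the explicit expression
    have hval : (∫ s in (0:ℝ)..(2 * π), F' (0, s))
        = π * (1 - c₀) ^ 2 * (μ - (1 - c₀) ^ 2 - 5 / 2) := by
      rw [intervalIntegral.integral_congr hEq]
      have hQ : ∀ x ∈ uIcc (0:ℝ) (2 * π),
          HasDerivAt (fun x => (1 - c₀) ^ 2 * (μ * (x / 2 + Real.sin x * Real.cos x / 2
              - Real.sin x * Real.cos x ^ 3)
            + (1 - c₀) ^ 2 * ((4 / 3) * (Real.sin x * Real.cos x ^ 5)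
              - (1 / 3) * (Real.sin x * Real.cos x ^ 3) - Real.sin x * Real.cos x / 2 - x / 2)
            - 8 * ((1 / 2) * (Real.sin x * Real.cos x ^ 7) + (1 / 12) * (Real.sin x * Real.cos x ^ 5)
              + (5 / 48) * (Real.sin x * Real.cos x ^ 3) + (5 / 32) * (Real.sin x * Real.cos x)
              + (5 / 32) * x)
            - (8 * c) * (Real.sin x * Real.cos x ^ 3)))
          ((4 * Real.sin x ^ 3 - 4 * Real.sin x)
            * (μ * (-Real.sin x) - 1 / 2 * (4 * Real.sin x ^ 3 - 4 * Real.sin x) * (1 - c₀) ^ 2)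
            * (1 - c₀) ^ 2
          + ((Real.sin x ^ 2 - 1) ^ 2 + c) * (2 * (1 - c₀)
            * (4 * (1 - c₀) * ((2 * Real.sin x * Real.cos x) * (Real.sin x * Real.cos x)
              + (Real.sin x ^ 2 - 1) * (Real.cos x ^ 2 - Real.sin x ^ 2))))) x := by
        intro x _
        have hSC1 := (Real.hasDerivAt_sin x).mul (Real.hasDerivAt_cos x)
        have hSC3 := (Real.hasDerivAt_sin x).mul ((Real.hasDerivAt_cos x).fun_pow 3)
        have hSC5 := (Real.hasDerivAt_sin x).mul ((Real.hasDerivAt_cos x).fun_pow 5)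
        have hSC7 := (Real.hasDerivAt_sin x).mul ((Real.hasDerivAt_cos x).fun_pow 7)
        have hid := hasDerivAt_id' (x := x)
        have h := (((((hid.div_const 2).add (hSC1.div_const 2)).sub hSC3).const_mul μ).add
            (((((hSC5.const_mul (4 / 3)).sub (hSC3.const_mul (1 / 3))).sub
              (hSC1.div_const 2)).sub (hid.div_const 2)).const_mul ((1 - c₀) ^ 2)) |>.sub
            ((((((hSC7.const_mul (1 / 2)).add (hSC5.const_mul (1 / 12))).add
              (hSC3.const_mul (5 / 48))).add (hSC1.const_mul (5 / 32))).add
              (hid.const_mul (5 / 32))).const_mul 8) |>.sub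
            (hSC3.const_mul (8 * c))).const_mul ((1 - c₀) ^ 2)
        refine h.congr_deriv (Eq.symm ?_)
        linear_combination ((-5/4:ℝ) * (1 - c₀) ^ 2 + (1/2:ℝ) * (1 - c₀) ^ 2 * μ
          + (-1/2:ℝ) * (1 - c₀) ^ 4 + (11/2:ℝ) * Real.cos x ^ 2 * (1 - c₀) ^ 2
          + (8:ℝ) * Real.cos x ^ 2 * (1 - c₀) ^ 2 * c + Real.cos x ^ 2 * (1 - c₀) ^ 2 * μ
          + (-1:ℝ) * Real.cos x ^ 2 * (1 - c₀) ^ 4 + (14/3:ℝ) * Real.cos x ^ 4 * (1 - c₀) ^ 2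
          + (-4/3:ℝ) * Real.cos x ^ 4 * (1 - c₀) ^ 4 + (4:ℝ) * Real.cos x ^ 6 * (1 - c₀) ^ 2
          + (-8:ℝ) * Real.sin x ^ 2 * (1 - c₀) ^ 2 + (-8:ℝ) * Real.sin x ^ 2 * (1 - c₀) ^ 2 * c
          + (-4:ℝ) * Real.sin x ^ 2 * (1 - c₀) ^ 2 * μ + (8:ℝ) * Real.sin x ^ 2 * (1 - c₀) ^ 4
          + (-40:ℝ) * Real.sin x ^ 2 * Real.cos x ^ 2 * (1 - c₀) ^ 2
          + (8:ℝ) * Real.sin x ^ 2 * Real.cos x ^ 2 * (1 - c₀) ^ 4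
          + (-32:ℝ) * Real.sin x ^ 2 * Real.cos x ^ 4 * (1 - c₀) ^ 2
          + (16:ℝ) * Real.sin x ^ 4 * (1 - c₀) ^ 2 + (-8:ℝ) * Real.sin x ^ 4 * (1 - c₀) ^ 4
          + (32:ℝ) * Real.sin x ^ 4 * Real.cos x ^ 2 * (1 - c₀) ^ 2
          + (-8:ℝ) * Real.sin x ^ 6 * (1 - c₀) ^ 2) * Real.sin_sq_add_cos_sq x
      rw [intervalIntegral.integral_eq_sub_of_hasDerivAt hQ
        (by apply Continuous.intervalIntegrable; fun_prop)]
      simp only [Real.sin_two_pi, Real.cos_two_pi, Real.sin_zero, Real.cos_zero]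
      ring
    -- put everything together
    have hfe : (fun t => (1 / 2) * ∫ s in (0:ℝ)..(2 * π), β (ρ t s) * (deriv (θ t) s - c₀) ^ 2)
        = fun t => (1 / 2) * ∫ s in (0:ℝ)..(2 * π), F (t, s) := by
      funext t
      congr 1
      refine intervalIntegral.integral_congr fun s _ => ?_
      have hd : deriv (θ t) s = fderiv ℝ Θ (t, s) (0, 1) := (aux_ps Θ hθsm t s).deriv
      rw [hd]
    rw [hfe, show (π / 2) * (1 - c₀) ^ 2 * (μ - (1 - c₀) ^ 2 - 5 / 2)
      = (1 / 2) * (π * (1 - c₀) ^ 2 * (μ - (1 - c₀) ^ 2 - 5 / 2)) by ring, ← hval]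
    exact (hbig.const_mul (1 / 2)).hasDerivWithinAt
  · intro hgt
    have h1 : (0:ℝ) < 1 - c₀ ∨ 1 - c₀ < 0 := by
      rcases lt_or_gt_of_ne (sub_ne_zero.mpr (Ne.symm hc₀)) with h | h
      · exact Or.inr h
      · exact Or.inl h
    have h2 : 0 < (1 - c₀) ^ 2 := by
      rcases h1 with h | h
      · positivity
      · nlinarith
    have h3 : 0 < μ - (1 - c₀) ^ 2 - 5 / 2 := by linarith
    have h4 : 0 < π / 2 := by positivity
    positivity
end

section
/- Let L > 0, k ≥ 2 an integer, and let θ, ρ ∈ C^∞([0,L]) with θ(L) − θ(0) = 2π be such that ρ and u(s) := θ(s) − 2πs/L extend to L/k-periodic functions. Then for any smooth β : ℝ → ℝ and any constant c₀, ∫₀^L (−sin θ(s), cos θ(s)) · g(s) ds = (0,0), where g(s) = ∂_s(β(ρ(s))(∂_s θ(s) − c₀)) is L/k-periodic. In particular, the Lagrange multipliers λ_{θ1}, λ_{θ2} defined via Π(θ)^{-1} applied to ∫₀^L (cos θ, sin θ) ∂_sθ β(ρ)(∂_sθ − c₀) ds vanish for such k-fold rotationally symmetric configurations. -/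
open Real Set

lemma trig_sum (k : ℕ) (hk : 2 ≤ k) :
    (∑ n ∈ Finset.range k, Real.cos (2*π*n/k)) = 0 ∧
    (∑ n ∈ Finset.range k, Real.sin (2*π*n/k)) = 0 := by
  have hkC : (k:ℂ) ≠ 0 := Nat.cast_ne_zero.mpr (by omega)
  set z : ℂ := Complex.exp (2*π/k * Complex.I) with hz
  have hz1 : z ≠ 1 := by
    rw [hz, Ne, Complex.exp_eq_one_iff]
    rintro ⟨n, hn⟩
    have h1 : (2*π : ℂ)/k = n * (2*π) := mul_right_cancel₀ Complex.I_ne_zero (hn.trans (by ring))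
    have h2 : (2*π : ℝ)/k = n * (2*π) := by exact_mod_cast h1
    have hπ := Real.pi_pos
    have hk2 : (2:ℝ) ≤ k := by exact_mod_cast hk
    have hn1 : (n:ℝ) * (2*π) = (2*π)/k := h2.symm
    have hlt : (0:ℝ) < (2*π)/k := by positivity
    have hlt2 : (2*π)/k < 2*π := by
      rw [div_lt_iff₀ (by linarith)]
      nlinarith
    have : (0:ℝ) < n ∧ (n:ℝ) < 1 := by
      constructor <;> nlinarith
    rcases this with ⟨ha, hb⟩
    have : (0:ℤ) < n := by exact_mod_cast ha
    have : (n:ℝ) ≥ 1 := by exact_mod_cast this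
    linarith
  have hzk : z ^ k = 1 := by
    rw [hz, ← Complex.exp_nat_mul]
    have : (k:ℂ) * (2*π/k * Complex.I) = 2*π*Complex.I := by field_simp
    rw [this, Complex.exp_two_pi_mul_I]
  have hsum : ∑ n ∈ Finset.range k, z ^ n = 0 := by
    rw [geom_sum_eq hz1, hzk, sub_self, zero_div]
  have hzn : ∀ n : ℕ, z ^ n = Complex.exp ((2*π*n/k : ℝ) * Complex.I) := by
    intro n
    rw [hz, ← Complex.exp_nat_mul]
    congr 1
    push_cast
    ring
  rw [Finset.sum_congr rfl (fun n _ => (hzn n))] at hsum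
  constructor
  · have := congrArg Complex.re hsum
    rw [Complex.re_sum, Complex.zero_re] at this
    rw [← this]
    exact Finset.sum_congr rfl fun n _ => (Complex.exp_ofReal_mul_I_re _).symm
  · have := congrArg Complex.im hsum
    rw [Complex.im_sum, Complex.zero_im] at this
    rw [← this]
    exact Finset.sum_congr rfl fun n _ => (Complex.exp_ofReal_mul_I_im _).symm

lemma key (T : ℝ) (k : ℕ) (hk : 2 ≤ k) (θ F : ℝ → ℝ)
    (hθc : Continuous θ) (hF : Continuous F)
    (hθsh : ∀ s, θ (s + T) = θ s + 2*π/k)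
    (hFsh : ∀ s, F (s + T) = F s) :
    (∫ s in (0:ℝ)..((k:ℝ)*T), Real.sin (θ s) * F s) = 0 ∧
    (∫ s in (0:ℝ)..((k:ℝ)*T), Real.cos (θ s) * F s) = 0 := by
  have hθn : ∀ n : ℕ, ∀ s, θ (s + n*T) = θ s + 2*π*n/k := by
    intro n
    induction n with
    | zero => simp
    | succ m ih =>
      intro s
      have : s + (m+1:ℕ)*T = (s + m*T) + T := by push_cast; ring
      rw [this, hθsh, ih]
      push_cast
      ring
  have hFn : ∀ n : ℕ, ∀ s, F (s + n*T) = F s := by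
    intro n
    induction n with
    | zero => simp
    | succ m ih =>
      intro s
      have : s + (m+1:ℕ)*T = (s + m*T) + T := by push_cast; ring
      rw [this, hFsh, ih]
  -- generic splitting for a continuous integrand
  have split : ∀ f : ℝ → ℝ, Continuous f →
      (∫ s in (0:ℝ)..((k:ℝ)*T), f s) = ∑ n ∈ Finset.range k, ∫ s in (0:ℝ)..T, f (s + n*T) := by
    intro f hf
    have h1 : (∫ s in (0:ℝ)..((k:ℝ)*T), f s)
        = ∑ n ∈ Finset.range k, ∫ s in ((n:ℝ)*T)..(((n:ℝ)+1)*T), f s := by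
      have := intervalIntegral.sum_integral_adjacent_intervals
        (a := fun n : ℕ => (n:ℝ)*T) (n := k) (f := f) (μ := MeasureTheory.volume)
        (fun i _ => hf.intervalIntegrable _ _)
      simp only [Nat.cast_zero, zero_mul, Nat.cast_add, Nat.cast_one] at this
      exact this.symm
    rw [h1]
    refine Finset.sum_congr rfl fun n _ => ?_
    rw [intervalIntegral.integral_comp_add_right f ((n:ℝ)*T)]
    congr 1 <;> ring
  set A := ∫ s in (0:ℝ)..T, Real.sin (θ s) * F s with hA
  set B := ∫ s in (0:ℝ)..T, Real.cos (θ s) * F s with hB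
  have hiA : IntervalIntegrable (fun s => Real.sin (θ s) * F s) MeasureTheory.volume 0 T :=
    ((Real.continuous_sin.comp hθc).mul hF).intervalIntegrable _ _
  have hiB : IntervalIntegrable (fun s => Real.cos (θ s) * F s) MeasureTheory.volume 0 T :=
    ((Real.continuous_cos.comp hθc).mul hF).intervalIntegrable _ _
  obtain ⟨hc, hs⟩ := trig_sum k hk
  constructor
  · rw [split (fun s => Real.sin (θ s) * F s) (by fun_prop)]
    have : ∀ n ∈ Finset.range k,
        (∫ s in (0:ℝ)..T, Real.sin (θ (s + n*T)) * F (s + n*T))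
        = Real.cos (2*π*n/k) * A + Real.sin (2*π*n/k) * B := by
      intro n _
      have hcongr : (fun s => Real.sin (θ (s + n*T)) * F (s + n*T))
          = fun s => Real.cos (2*π*n/k) * (Real.sin (θ s) * F s)
              + Real.sin (2*π*n/k) * (Real.cos (θ s) * F s) := by
        funext s
        rw [hθn n s, hFn n s, Real.sin_add]
        ring
      rw [hcongr, intervalIntegral.integral_add (hiA.const_mul _) (hiB.const_mul _),
        intervalIntegral.integral_const_mul, intervalIntegral.integral_const_mul]
    rw [Finset.sum_congr rfl this, Finset.sum_add_distrib, ← Finset.sum_mul, ← Finset.sum_mul,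
      hc, hs, zero_mul, zero_mul, add_zero]
  · rw [split (fun s => Real.cos (θ s) * F s) (by fun_prop)]
    have : ∀ n ∈ Finset.range k,
        (∫ s in (0:ℝ)..T, Real.cos (θ (s + n*T)) * F (s + n*T))
        = Real.cos (2*π*n/k) * B - Real.sin (2*π*n/k) * A := by
      intro n _
      have hcongr : (fun s => Real.cos (θ (s + n*T)) * F (s + n*T))
          = fun s => Real.cos (2*π*n/k) * (Real.cos (θ s) * F s)
              - Real.sin (2*π*n/k) * (Real.sin (θ s) * F s) := by
        funext s
        rw [hθn n s, hFn n s, Real.cos_add]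
        ring
      rw [hcongr, intervalIntegral.integral_sub (hiB.const_mul _) (hiA.const_mul _),
        intervalIntegral.integral_const_mul, intervalIntegral.integral_const_mul]
    rw [Finset.sum_congr rfl this, Finset.sum_sub_distrib, ← Finset.sum_mul, ← Finset.sum_mul,
      hc, hs, zero_mul, zero_mul, sub_zero]


theorem stmt_15 (L c₀ : ℝ) (k : ℕ) (hL : 0 < L) (hk : 2 ≤ k)
    (β θ ρ : ℝ → ℝ)
    (hβsm : ContDiff ℝ (⊤ : ℕ∞) β) (hθsm : ContDiff ℝ (⊤ : ℕ∞) θ) (hρsm : ContDiff ℝ (⊤ : ℕ∞) ρ)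
    (hrot : θ L - θ 0 = 2 * π)
    -- k-fold rotational symmetry: u = θ - φ and ρ are L/k-periodic
    (husym : ∀ s : ℝ, θ (s + L / k) - 2 * π * (s + L / k) / L = θ s - 2 * π * s / L)
    (hρsym : ∀ s : ℝ, ρ (s + L / k) = ρ s)
    (g : ℝ → ℝ)
    (hg : g = deriv (fun s => β (ρ s) * (deriv θ s - c₀))) :
    (∫ s in (0:ℝ)..L, (-Real.sin (θ s)) * g s) = 0 ∧
    (∫ s in (0:ℝ)..L, Real.cos (θ s) * g s) = 0 ∧
    (∫ s in (0:ℝ)..L, Real.cos (θ s) * (deriv θ s * (β (ρ s) * (deriv θ s - c₀)))) = 0 ∧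
    (∫ s in (0:ℝ)..L, Real.sin (θ s) * (deriv θ s * (β (ρ s) * (deriv θ s - c₀)))) = 0 := by
  have hkR : (k:ℝ) ≠ 0 := Nat.cast_ne_zero.mpr (by omega)
  set T : ℝ := L / k with hTdef
  have hθsh : ∀ s, θ (s + T) = θ s + 2*π/(k:ℝ) := by
    intro s
    have h := husym s
    have h2 : 2 * π * (s + T) / L - 2 * π * s / L = 2*π/(k:ℝ) := by
      rw [hTdef]
      field_simp
      ring
    linarith
  have hθsm' : ContDiff ℝ (⊤:ℕ∞) θ := hθsm.of_le (by simp)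
  have hβsm' : ContDiff ℝ (⊤:ℕ∞) β := hβsm.of_le (by simp)
  have hρsm' : ContDiff ℝ (⊤:ℕ∞) ρ := hρsm.of_le (by simp)
  have hderivθ : ContDiff ℝ (⊤:ℕ∞) (deriv θ) := (contDiff_infty_iff_deriv.mp hθsm').2
  have hdθper : ∀ s, deriv θ (s + T) = deriv θ s := by
    intro s
    have e1 : deriv (fun x => θ (x + T)) s = deriv θ (s + T) := deriv_comp_add_const θ T s
    have e2 : (fun x => θ (x + T)) = fun x => θ x + 2*π/(k:ℝ) := funext hθsh
    rw [← e1, e2]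
    simp
  have hh : ContDiff ℝ (⊤:ℕ∞) (fun s => β (ρ s) * (deriv θ s - c₀)) :=
    (hβsm'.comp hρsm').mul (hderivθ.sub contDiff_const)
  have hhper : ∀ s, β (ρ (s + T)) * (deriv θ (s + T) - c₀) = β (ρ s) * (deriv θ s - c₀) := by
    intro s
    rw [hρsym s, hdθper s]
  have hgper : ∀ s, g (s + T) = g s := by
    intro s
    rw [hg]
    refine (deriv_comp_add_const (fun s => β (ρ s) * (deriv θ s - c₀)) T s).symm.trans ?_
    congr 1
    exact funext hhper
  have hgcont : Continuous g := by
    rw [hg]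
    exact ((contDiff_infty_iff_deriv.mp hh).2).continuous
  have hhcont : Continuous (fun s => β (ρ s) * (deriv θ s - c₀)) := hh.continuous
  have hF2cont : Continuous (fun s => deriv θ s * (β (ρ s) * (deriv θ s - c₀))) :=
    hderivθ.continuous.mul hhcont
  have hF2per : ∀ s, deriv θ (s + T) * (β (ρ (s + T)) * (deriv θ (s + T) - c₀))
      = deriv θ s * (β (ρ s) * (deriv θ s - c₀)) := by
    intro s
    rw [hρsym s, hdθper s]
  have hLT : L = (k:ℝ) * T := by
    rw [hTdef]
    field_simp
  obtain ⟨hg1, hg2⟩ := key T k hk θ g hθsm'.continuous hgcont hθsh hgper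
  obtain ⟨hF1, hF2⟩ := key T k hk θ _ hθsm'.continuous hF2cont hθsh hF2per
  refine ⟨?_, ?_, ?_, ?_⟩
  · rw [hLT]
    simp only [neg_mul]
    rw [intervalIntegral.integral_neg, hg1, neg_zero]
  · rw [hLT]; exact hg2
  · rw [hLT]; exact hF2
  · rw [hLT]; exact hF1
end

section
/- Let L > 0, ν ∈ ℝ, x₀ ∈ ℝ, μ > 0, and suppose β ∈ C^∞(ℝ) satisfies β' ≥ 0 on [x₀,∞) and β'(x₀) = 0. Suppose ρ : [0,∞) × ℝ → ℝ is smooth, L-periodic in s, bounded, and satisfies ∂_t ρ = μ ∂_s²ρ − (1/2) f(ρ)(g)²(ρ − x₀) + (1/(2L))∫₀^L β'(ρ)(g)² ds with f(x) = β'(x)/(x − x₀) (extended by β''(x₀)) and g = ∂_s θ − c₀ a bounded smooth function. If ρ(0,·) ≥ x₀, then ρ(t,·) ≥ x₀ for all t ≥ 0. -/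
set_option maxHeartbeats 1000000


open Real Set Filter Topology

theorem stmt_18 (L ν x₀ μ : ℝ) (hL : 0 < L) (hμ : 0 < μ)
    (β β' β'' f : ℝ → ℝ)
    (hβsm : ContDiff ℝ (⊤ : ℕ∞) β)
    (hβ' : ∀ x, HasDerivAt β (β' x) x)
    (hβ'' : ∀ x, HasDerivAt β' (β'' x) x)
    (hβ'nonneg : ∀ x, x₀ ≤ x → 0 ≤ β' x)
    (hβ'x₀ : β' x₀ = 0)
    (hf : ∀ x, x ≠ x₀ → f x = β' x / (x - x₀)) (hfx₀ : f x₀ = β'' x₀)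
    (ρ g : ℝ → ℝ → ℝ) (ρt ρs ρss : ℝ → ℝ → ℝ)
    (hρcont : ContinuousOn (fun p : ℝ × ℝ => ρ p.1 p.2) (Ici 0 ×ˢ univ))
    (hρbdd : ∃ R : ℝ, ∀ t s, 0 ≤ t → |ρ t s| ≤ R)
    (hgbdd : ∃ M : ℝ, ∀ t s, 0 ≤ t → |g t s| ≤ M)
    (hgcont : ContinuousOn (fun p : ℝ × ℝ => g p.1 p.2) (Ici 0 ×ˢ univ))
    (hper : ∀ t s, 0 ≤ t → ρ t (s + L) = ρ t s)
    (hρt : ∀ t s, 0 < t → HasDerivAt (fun τ => ρ τ s) (ρt t s) t)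
    (hρs : ∀ t s, 0 < t → HasDerivAt (fun x => ρ t x) (ρs t s) s)
    (hρss : ∀ t s, 0 < t → HasDerivAt (fun x => ρs t x) (ρss t s) s)
    (hpde : ∀ t s, 0 < t →
      ρt t s = μ * ρss t s - (1 / 2) * f (ρ t s) * (g t s) ^ 2 * (ρ t s - x₀)
        + (1 / (2 * L)) * ∫ r in (0:ℝ)..L, β' (ρ t r) * (g t r) ^ 2)
    (h0 : ∀ s, x₀ ≤ ρ 0 s) :
    ∀ t s, 0 ≤ t → x₀ ≤ ρ t s := by
  obtain ⟨R, hR⟩ := hρbdd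
  obtain ⟨M, hM⟩ := hgbdd
  have hM0 : 0 ≤ M := le_trans (abs_nonneg _) (hM 0 0 le_rfl)
  have hR0 : 0 ≤ R := le_trans (abs_nonneg _) (hR 0 0 le_rfl)
  -- smoothness of β', β''
  have hβ'eq : β' = deriv β := funext fun x => ((hβ' x).deriv).symm
  have hderiv1 : ContDiff ℝ 1 (deriv β) := by
    have h2 : ContDiff ℝ (1 + 1) β := by
      have h3 : ((1 : WithTop ℕ∞) + 1) = 2 := by norm_num
      rw [h3]; exact hβsm.of_le (WithTop.coe_le_coe.mpr (le_top : (2 : ℕ∞) ≤ ⊤))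
    exact (contDiff_succ_iff_deriv.mp h2).2.2
  have hβ'cont : Continuous β' := hβ'eq ▸ hderiv1.continuous
  have hβ''eq : β'' = deriv β' := funext fun x => ((hβ'' x).deriv).symm
  have hβ''cont : Continuous β'' := by
    rw [hβ''eq, hβ'eq]
    exact hderiv1.continuous_deriv le_rfl
  set B : ℝ := R + |x₀| + 1 with hB
  have hx₀I : x₀ ∈ Icc (-B) B := by
    constructor <;> [nlinarith [abs_nonneg x₀, neg_abs_le x₀, le_abs_self x₀];
      nlinarith [le_abs_self x₀]]
  have hmemI : ∀ t s, 0 ≤ t → ρ t s ∈ Icc (-B) B := by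
    intro t s ht
    have := abs_le.mp (hR t s ht)
    constructor <;> [nlinarith [abs_nonneg x₀]; nlinarith [abs_nonneg x₀]]
  -- bound on β'' on the compact interval
  obtain ⟨z, hz, hzmax⟩ := isCompact_Icc.exists_isMaxOn ⟨x₀, hx₀I⟩
    (hβ''cont.abs.continuousOn : ContinuousOn (fun x => |β'' x|) (Icc (-B) B))
  set C : ℝ := |β'' z| with hCdef
  have hC : ∀ x ∈ Icc (-B) B, |β'' x| ≤ C := isMaxOn_iff.mp hzmax
  have hC0 : 0 ≤ C := abs_nonneg _
  -- Lipschitz-type bound on β' around x₀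
  have hβ'bd : ∀ x ∈ Icc (-B) B, |β' x| ≤ C * |x - x₀| := by
    intro x hx
    have := Convex.norm_image_sub_le_of_norm_hasDerivWithin_le
      (f := β') (f' := β'') (C := C) (s := Icc (-B) B)
      (fun y _ => (hβ'' y).hasDerivWithinAt)
      (fun y hy => by simpa using hC y hy) (convex_Icc _ _) hx₀I hx
    simpa [hβ'x₀, Real.norm_eq_abs] using this
  have hfbd : ∀ x ∈ Icc (-B) B, |f x| ≤ C := by
    intro x hx
    rcases eq_or_ne x x₀ with h | h
    · rw [h, hfx₀]; exact hC _ hx₀I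
    · rw [hf x h, abs_div, div_le_iff₀ (abs_pos.mpr (sub_ne_zero.mpr h))]
      exact hβ'bd x hx
  set K : ℝ := C * M ^ 2 + 1 with hKdef
  -- main comparison claim
  have key : ∀ ε : ℝ, 0 < ε → ∀ T : ℝ, 0 < T → ∀ t ∈ Icc (0:ℝ) T, ∀ r ∈ Icc (0:ℝ) L,
      0 < ρ t r - x₀ + ε * Real.exp (K * t) := by
    intro ε hε T hT
    by_contra hcon
    push_neg at hcon
    obtain ⟨ta, hta, sa, hsa, hwa⟩ := hcon
    set S : Set (ℝ × ℝ) :=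
      {p | p ∈ Icc (0:ℝ) T ×ˢ Icc (0:ℝ) L ∧
        ρ p.1 p.2 - x₀ + ε * Real.exp (K * p.1) ≤ 0} with hSdef
    have hSne : S.Nonempty := ⟨(ta, sa), ⟨⟨hta, hsa⟩, hwa⟩⟩
    have hwcont : ContinuousOn (fun p : ℝ × ℝ => ρ p.1 p.2 - x₀ + ε * Real.exp (K * p.1))
        (Ici 0 ×ˢ univ) := by
      apply ContinuousOn.add (hρcont.sub continuousOn_const)
      exact Continuous.continuousOn (by fun_prop)
    have hScl : IsClosed S := by
      have h1 : IsClosed ((Ici (0:ℝ) ×ˢ (univ : Set ℝ)) ∩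
          (fun p : ℝ × ℝ => ρ p.1 p.2 - x₀ + ε * Real.exp (K * p.1)) ⁻¹' Iic 0) :=
        hwcont.preimage_isClosed_of_isClosed (isClosed_Ici.prod isClosed_univ) isClosed_Iic
      have h2 : S = (Icc (0:ℝ) T ×ˢ Icc (0:ℝ) L) ∩
          ((Ici (0:ℝ) ×ˢ (univ : Set ℝ)) ∩
            (fun p : ℝ × ℝ => ρ p.1 p.2 - x₀ + ε * Real.exp (K * p.1)) ⁻¹' Iic 0) := by
        ext p
        constructor
        · rintro ⟨hp1, hp2⟩
          exact ⟨hp1, ⟨⟨hp1.1.1, trivial⟩, hp2⟩⟩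
        · rintro ⟨hp1, _, hp2⟩
          exact ⟨hp1, hp2⟩
      rw [h2]
      exact (isClosed_Icc.prod isClosed_Icc).inter h1
    have hScomp : IsCompact S :=
      (isCompact_Icc.prod isCompact_Icc).of_isClosed_subset hScl (fun p hp => hp.1)
    obtain ⟨p₁, hp₁S, hp₁min⟩ := hScomp.exists_isMinOn hSne continuous_fst.continuousOn
    obtain ⟨⟨⟨ht₁0, ht₁T⟩, hs₁mem⟩, hw₁⟩ := hp₁S
    set t₁ := p₁.1 with ht₁def
    set s₁ := p₁.2 with hs₁def
    have hmin' : ∀ q ∈ S, t₁ ≤ q.1 := isMinOn_iff.mp hp₁min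
    have ht₁pos : 0 < t₁ := by
      rcases lt_or_eq_of_le ht₁0 with h | h
      · exact h
      · exfalso
        have h1 := h0 s₁
        rw [← h] at hw₁
        simp only [mul_zero, Real.exp_zero, mul_one] at hw₁
        linarith
    -- Claim A : at time t₁ the comparison function is still nonnegative everywhere on [0, L]
    have hA : ∀ r ∈ Icc (0:ℝ) L, 0 ≤ ρ t₁ r - x₀ + ε * Real.exp (K * t₁) := by
      intro r hr
      by_contra hneg
      push_neg at hneg
      have hcont1 : ContinuousOn (fun t => ρ t r - x₀ + ε * Real.exp (K * t)) (Ici (0:ℝ)) := by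
        apply ContinuousOn.add
        · exact ContinuousOn.sub
            (hρcont.comp (Continuous.continuousOn
              (continuous_id.prodMk continuous_const))
              (fun t ht => ⟨ht, trivial⟩)) continuousOn_const
        · exact Continuous.continuousOn (by fun_prop)
      have hcwa : ContinuousWithinAt (fun t => ρ t r - x₀ + ε * Real.exp (K * t))
          (Ico 0 t₁) t₁ := by
        apply (hcont1.continuousWithinAt (mem_Ici.mpr ht₁0)).mono (fun x hx => hx.1)
      have hne : (𝓝[Ico (0:ℝ) t₁] t₁).NeBot := by
        apply mem_closure_iff_nhdsWithin_neBot.mp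
        rw [closure_Ico (ne_of_lt ht₁pos)]
        exact ⟨ht₁0, le_rfl⟩
      have hev : ∀ᶠ t in 𝓝[Ico (0:ℝ) t₁] t₁,
          ρ t r - x₀ + ε * Real.exp (K * t) < 0 :=
        hcwa.eventually_lt_const hneg
      obtain ⟨t', ht'lt, ht'mem⟩ := (hev.and eventually_mem_nhdsWithin).exists
      have : (t', r) ∈ S := ⟨⟨⟨ht'mem.1, le_trans ht'mem.2.le ht₁T⟩, hr⟩, ht'lt.le⟩
      exact absurd (hmin' _ this) (not_le.mpr ht'mem.2)
    have hw₁0 : ρ t₁ s₁ - x₀ + ε * Real.exp (K * t₁) = 0 := le_antisymm hw₁ (hA s₁ hs₁mem)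
    set E : ℝ := ε * Real.exp (K * t₁) with hE
    have hEpos : 0 < E := by positivity
    have hρval : ρ t₁ s₁ = x₀ - E := by rw [hE]; linarith
    -- global minimum over all of ℝ by periodicity
    have hP : Function.Periodic (fun x => ρ t₁ x) L := fun x => hper t₁ x ht₁0
    have hmins : ∀ r : ℝ, ρ t₁ s₁ ≤ ρ t₁ r := by
      intro r
      have h1 : ρ t₁ r = ρ t₁ (r - (⌊r / L⌋ : ℤ) * L) := (hP.sub_int_mul_eq ⌊r / L⌋).symm
      have h2 : (0:ℝ) ≤ r - (⌊r / L⌋ : ℤ) * L := Int.sub_floor_div_mul_nonneg r hL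
      have h3 : r - (⌊r / L⌋ : ℤ) * L < L := Int.sub_floor_div_mul_lt r hL
      have h4 := hA _ ⟨h2, h3.le⟩
      rw [h1, hρval]
      linarith
    -- second derivative nonnegative at the interior minimum
    have hss0 : 0 ≤ ρss t₁ s₁ := by
      by_contra hcon2
      push_neg at hcon2
      have hds : ρs t₁ s₁ = 0 := by
        have hlm : IsLocalMin (fun x => ρ t₁ x) s₁ := Filter.Eventually.of_forall hmins
        exact hlm.hasDerivAt_eq_zero (hρs t₁ s₁ ht₁pos)
      have hslope := hasDerivAt_iff_tendsto_slope.mp (hρss t₁ s₁ ht₁pos)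
      have h4 : ∀ᶠ x in 𝓝[>] s₁, slope (fun y => ρs t₁ y) s₁ x < 0 :=
        (hslope.mono_left (nhdsWithin_mono _ (fun x hx => ne_of_gt hx))).eventually_lt_const
          hcon2
      have h5 : ∀ᶠ x in 𝓝[>] s₁, ρs t₁ x < 0 := by
        filter_upwards [h4, self_mem_nhdsWithin] with x hx hx'
        rw [slope_def_field, hds, sub_zero] at hx
        rcases div_neg_iff.mp hx with ⟨h, h'⟩ | ⟨h, h'⟩
        · linarith [sub_pos.mpr (mem_Ioi.mp hx')]
        · exact h
      obtain ⟨a, ha, hIoo⟩ := mem_nhdsGT_iff_exists_Ioo_subset.mp h5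
      have has₁ : s₁ < a := mem_Ioi.mp ha
      set b : ℝ := (s₁ + a) / 2 with hbdef
      have hb1 : s₁ < b := by rw [hbdef]; linarith
      have hb2 : b < a := by rw [hbdef]; linarith
      have hanti : StrictAntiOn (fun x => ρ t₁ x) (Icc s₁ b) := by
        apply strictAntiOn_of_deriv_neg (convex_Icc _ _)
        · exact Continuous.continuousOn
            (continuous_iff_continuousAt.mpr fun x => (hρs t₁ x ht₁pos).continuousAt)
        · intro x hx
          rw [interior_Icc] at hx
          rw [(hρs t₁ x ht₁pos).deriv]
          exact hIoo ⟨hx.1, lt_trans hx.2 hb2⟩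
      have := hanti (left_mem_Icc.mpr hb1.le) (right_mem_Icc.mpr hb1.le) hb1
      have h6 := hmins b
      simp only at this
      linarith
    -- time derivative of the comparison function is nonpositive
    have hφ : HasDerivAt (fun t => ρ t s₁ + ε * Real.exp (K * t))
        (ρt t₁ s₁ + ε * (Real.exp (K * t₁) * (K * 1))) t₁ :=
      (hρt t₁ s₁ ht₁pos).add ((((hasDerivAt_id t₁).const_mul K).exp).const_mul ε)
    have hD : ρt t₁ s₁ + ε * (Real.exp (K * t₁) * (K * 1)) ≤ 0 := by
      have hslope := hasDerivAt_iff_tendsto_slope.mp hφ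
      have h2 := hslope.mono_left
        (nhdsWithin_mono _ (fun x (hx : x ∈ Iio t₁) => ne_of_lt hx))
      refine le_of_tendsto h2 ?_
      filter_upwards [Ioo_mem_nhdsLT_of_mem (⟨ht₁pos, le_rfl⟩ : t₁ ∈ Ioc 0 t₁)] with t ht
      have hwt : 0 < ρ t s₁ - x₀ + ε * Real.exp (K * t) := by
        by_contra hc
        push_neg at hc
        have hmem : (t, s₁) ∈ S := ⟨⟨⟨ht.1.le, le_trans ht.2.le ht₁T⟩, hs₁mem⟩, hc⟩
        exact absurd (hmin' _ hmem) (not_le.mpr ht.2)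
      rw [slope_def_field]
      apply div_nonpos_of_nonneg_of_nonpos
      · have : ρ t₁ s₁ + ε * Real.exp (K * t₁) = x₀ := by linarith
        rw [this]
        linarith
      · linarith [ht.2]
    -- lower bound on the nonlocal integral
    have hcontρ : Continuous (fun r => ρ t₁ r) :=
      continuous_iff_continuousAt.mpr fun x => (hρs t₁ x ht₁pos).continuousAt
    have hcontg : Continuous (fun r => g t₁ r) := by
      rw [← continuousOn_univ]
      exact hgcont.comp (Continuous.continuousOn
        (continuous_const.prodMk continuous_id))
        (fun r _ => ⟨ht₁0, trivial⟩)
    have hintg : IntervalIntegrable (fun r => β' (ρ t₁ r) * g t₁ r ^ 2)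
        MeasureTheory.volume 0 L :=
      Continuous.intervalIntegrable ((hβ'cont.comp hcontρ).mul (hcontg.pow 2)) 0 L
    have hpt : ∀ r ∈ Icc (0:ℝ) L, -(C * M ^ 2 * E) ≤ β' (ρ t₁ r) * g t₁ r ^ 2 := by
      intro r hr
      have hgr := abs_le.mp (hM t₁ r ht₁0)
      have hg2 : g t₁ r ^ 2 ≤ M ^ 2 := sq_le_sq' hgr.1 hgr.2
      have hg2' : 0 ≤ g t₁ r ^ 2 := sq_nonneg _
      rcases le_or_gt x₀ (ρ t₁ r) with h | h
      · have hb := hβ'nonneg _ h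
        nlinarith [mul_nonneg hb hg2',
          mul_nonneg (mul_nonneg hC0 (sq_nonneg M)) hEpos.le]
      · have hρr := hA r hr
        have habs : |ρ t₁ r - x₀| ≤ E := by
          rw [abs_of_nonpos (by linarith)]
          rw [hE] at hρr ⊢
          linarith
        have hb1 : |β' (ρ t₁ r)| ≤ C * E := by
          calc |β' (ρ t₁ r)| ≤ C * |ρ t₁ r - x₀| := hβ'bd _ (hmemI t₁ r ht₁0)
            _ ≤ C * E := by nlinarith
        have hb2 : -(C * E) ≤ β' (ρ t₁ r) := by
          have := neg_abs_le (β' (ρ t₁ r))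
          linarith
        nlinarith [mul_nonneg (by linarith : (0:ℝ) ≤ β' (ρ t₁ r) + C * E) hg2',
          mul_nonneg (mul_nonneg hC0 hEpos.le) (by linarith : (0:ℝ) ≤ M ^ 2 - g t₁ r ^ 2)]
    have hintlb : L * (-(C * M ^ 2 * E)) ≤ ∫ r in (0:ℝ)..L, β' (ρ t₁ r) * g t₁ r ^ 2 := by
      have h := intervalIntegral.integral_mono_on hL.le
        (intervalIntegrable_const (c := -(C * M ^ 2 * E))) hintg hpt
      rw [intervalIntegral.integral_const, sub_zero, smul_eq_mul] at h
      exact h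
    -- final contradiction via the PDE
    have hpde₁ := hpde t₁ s₁ ht₁pos
    have hfbd₁ : |f (ρ t₁ s₁)| ≤ C := hfbd _ (hmemI t₁ s₁ ht₁0)
    have hgs := abs_le.mp (hM t₁ s₁ ht₁0)
    have hg2₁ : g t₁ s₁ ^ 2 ≤ M ^ 2 := sq_le_sq' hgs.1 hgs.2
    have hg2₁' : 0 ≤ g t₁ s₁ ^ 2 := sq_nonneg _
    have hfge : -C ≤ f (ρ t₁ s₁) := by
      have := neg_abs_le (f (ρ t₁ s₁))
      linarith
    have hfg : -(C * M ^ 2) ≤ f (ρ t₁ s₁) * g t₁ s₁ ^ 2 := by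
      nlinarith [mul_nonneg (by linarith : (0:ℝ) ≤ f (ρ t₁ s₁) + C) hg2₁',
        mul_nonneg hC0 (by linarith : (0:ℝ) ≤ M ^ 2 - g t₁ s₁ ^ 2)]
    have hIterm : -(1 / 2 * (C * M ^ 2 * E)) ≤
        (1 / (2 * L)) * ∫ r in (0:ℝ)..L, β' (ρ t₁ r) * (g t₁ r) ^ 2 := by
      have h2L : (0:ℝ) < 1 / (2 * L) := by positivity
      have h := mul_le_mul_of_nonneg_left hintlb h2L.le
      calc -(1 / 2 * (C * M ^ 2 * E)) = (1 / (2 * L)) * (L * (-(C * M ^ 2 * E))) := by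
            field_simp
        _ ≤ _ := h
    have hμss : 0 ≤ μ * ρss t₁ s₁ := mul_nonneg hμ.le hss0
    have hsub : ρ t₁ s₁ - x₀ = -E := by rw [hρval]; ring
    rw [hsub] at hpde₁
    have h7 : -(1 / 2 * (C * M ^ 2 * E)) ≤
        -((1 / 2) * f (ρ t₁ s₁) * g t₁ s₁ ^ 2 * (-E)) := by
      nlinarith [mul_le_mul_of_nonneg_right hfg hEpos.le]
    have h8 : ρt t₁ s₁ ≤ -(C * M ^ 2 * E) - E := by
      have h9 : ε * (Real.exp (K * t₁) * (K * 1)) = C * M ^ 2 * E + E := by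
        rw [hE, hKdef]; ring
      linarith [hD, h9]
    linarith [hpde₁, h7, hIterm, hμss, h8, hEpos]
  -- conclude
  intro t s ht
  rcases eq_or_lt_of_le ht with h | htpos
  · rw [← h]; exact h0 s
  · by_contra hc
    push_neg at hc
    have hPt : Function.Periodic (fun x => ρ t x) L := fun x => hper t x ht
    have h1 : ρ t s = ρ t (s - (⌊s / L⌋ : ℤ) * L) := (hPt.sub_int_mul_eq ⌊s / L⌋).symm
    have h2 : (0:ℝ) ≤ s - (⌊s / L⌋ : ℤ) * L := Int.sub_floor_div_mul_nonneg s hL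
    have h3 : s - (⌊s / L⌋ : ℤ) * L ≤ L := (Int.sub_floor_div_mul_lt s hL).le
    set ε : ℝ := (x₀ - ρ t s) / Real.exp (K * t) with hεdef
    have hεpos : 0 < ε := div_pos (by linarith) (exp_pos _)
    have hkey := key ε hεpos t htpos t ⟨ht, le_rfl⟩ _ ⟨h2, h3⟩
    rw [← h1] at hkey
    have hmul : ε * Real.exp (K * t) = x₀ - ρ t s := by
      rw [hεdef, div_mul_cancel₀]
      exact (exp_pos _).ne'
    rw [hmul] at hkey
    linarith
end
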